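/- arXiv:1302.6447 — 4 statements merged into one kernel-verified Lean document; each statement's English description precedes it below -/
import Mathlib

section
/- Let (T_k) be continuous linear operators on ω with matrices (a^{(k)}_{i,j}). If for every N ≥ 0, l ≥ 1, K ≥ 1 there exists k ≥ K with span{(a^{(k)}_{i,j})_{i=0,…,l−1} : j ≥ N} = 𝕂^l, then (T_k) possesses a hypercyclic subspace. -/
open Filter Topology

namespace HCAux

variable {𝕜 : Type*} [RCLike 𝕜]

/-- A sequence with dense range in `𝕜`. -/
noncomputable def DD (𝕜 : Type*) [RCLike 𝕜] : ℕ → 𝕜 :=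
  (Set.Countable.exists_eq_range
    (TopologicalSpace.exists_countable_dense 𝕜).choose_spec.1
    (TopologicalSpace.exists_countable_dense 𝕜).choose_spec.2.nonempty).choose

lemma DD_dense (𝕜 : Type*) [RCLike 𝕜] : DenseRange (DD 𝕜) := by
  have h := (Set.Countable.exists_eq_range
    (TopologicalSpace.exists_countable_dense 𝕜).choose_spec.1
    (TopologicalSpace.exists_countable_dense 𝕜).choose_spec.2.nonempty).choose_spec
  unfold DD
  rw [DenseRange, ← h]
  exact (TopologicalSpace.exists_countable_dense 𝕜).choose_spec.2

variable (T : ℕ → (ℕ → 𝕜) →L[𝕜] (ℕ → 𝕜))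

lemma exists_rowBound (k i : ℕ) : ∃ R : ℕ, ∀ x : ℕ → 𝕜, (∀ c < R, x c = 0) → T k x i = 0 := by
  set f : (ℕ → 𝕜) →L[𝕜] 𝕜 := (ContinuousLinearMap.proj i).comp (T k) with hf
  have hfx : ∀ x, f x = T k x i := fun x => rfl
  have h1 : f ⁻¹' Metric.ball 0 1 ∈ 𝓝 (0 : ℕ → 𝕜) := by
    apply f.continuous.continuousAt.preimage_mem_nhds
    simpa using Metric.ball_mem_nhds _ one_pos
  rw [nhds_pi, Filter.mem_pi] at h1
  obtain ⟨I, hIfin, t, ht, hsub⟩ := h1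
  obtain ⟨R, hR⟩ := hIfin.bddAbove
  refine ⟨R + 1, fun x hx => ?_⟩
  rw [← hfx]
  have key : ∀ s : 𝕜, ‖f (s • x)‖ < 1 := by
    intro s
    have : s • x ∈ Set.pi I t := by
      intro i hi
      have : x i = 0 := hx i (Nat.lt_succ_of_le (hR hi))
      simp [this]
      exact mem_of_mem_nhds (by simpa using ht i)
    simpa using hsub this
  by_contra hne
  obtain ⟨s, hs⟩ := NormedField.exists_lt_norm 𝕜 (1 / ‖f x‖)
  have h2 := key s
  rw [map_smul, norm_smul] at h2
  have hfxp : 0 < ‖f x‖ := norm_pos_iff.2 hne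
  have h3 : 1 / ‖f x‖ * ‖f x‖ < ‖s‖ * ‖f x‖ := by nlinarith
  rw [one_div_mul_cancel (ne_of_gt hfxp)] at h3
  nlinarith

/-- Bound on the support of row `i` of `T k`. -/
noncomputable def rowB (k i : ℕ) : ℕ := (exists_rowBound T k i).choose

lemma rowB_spec (k i : ℕ) : ∀ x : ℕ → 𝕜, (∀ c < rowB T k i, x c = 0) → T k x i = 0 :=
  (exists_rowBound T k i).choose_spec

lemma interp (k l N : ℕ)
    (hspan : Submodule.span 𝕜
      {v : Fin l → 𝕜 | ∃ j ≥ N, v = fun i : Fin l => T k (Pi.single j 1) (i : ℕ)} = ⊤)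
    (w : Fin l → 𝕜) :
    ∃ (v : ℕ → 𝕜) (B : ℕ), (∀ c < N, v c = 0) ∧ (∀ c ≥ B, v c = 0) ∧
      (∀ i : Fin l, T k v i = w i) := by
  have hw : w ∈ Submodule.span 𝕜
      {v : Fin l → 𝕜 | ∃ j ≥ N, v = fun i : Fin l => T k (Pi.single j 1) (i : ℕ)} := by
    rw [hspan]; trivial
  rw [Submodule.mem_span_set'] at hw
  obtain ⟨nn, f, g, hsum⟩ := hw
  choose j hjN hjcol using fun i => (g i).2
  refine ⟨∑ i, f i • (Pi.single (j i) (1 : 𝕜) : ℕ → 𝕜), (Finset.univ.sup j) + 1, ?_, ?_, ?_⟩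
  · intro c hc
    rw [Finset.sum_apply]
    apply Finset.sum_eq_zero
    intro i _
    have : c ≠ j i := fun hc' => absurd (hjN i) (by omega)
    simp [Pi.single_apply, this]
  · intro c hc
    rw [Finset.sum_apply]
    apply Finset.sum_eq_zero
    intro i _
    have hji : j i ≤ Finset.univ.sup j := Finset.le_sup (Finset.mem_univ i)
    have : c ≠ j i := by omega
    simp [Pi.single_apply, this]
  · intro i
    have h4 : T k (∑ i, f i • (Pi.single (j i) (1:𝕜) : ℕ → 𝕜))
        = ∑ i, f i • T k (Pi.single (j i) 1) := by
      rw [map_sum]; simp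
    rw [h4]
    have h5 := congrFun hsum i
    rw [Finset.sum_apply] at h5 ⊢
    rw [← h5]
    apply Finset.sum_congr rfl
    intro a _
    have h6 := congrFun (hjcol a) i
    simp [h6]

attribute [irreducible] DD rowB

/-- Enumeration of tuples `(junk, n, l, L)`. -/
noncomputable def σ : ℕ → ℕ × ℕ × ℕ × List ℕ := Denumerable.ofNat _

lemma exists_stage (t : ℕ × ℕ × List ℕ) (n₀ : ℕ) : ∃ m ≥ n₀, (σ m).2 = t := by
  have hinj : Function.Injective (fun j : ℕ => Encodable.encode (j, t)) := by
    intro a b hab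
    simpa using congrArg (Denumerable.ofNat (ℕ × ℕ × ℕ × List ℕ)) hab
  have hinf : (Set.range (fun j : ℕ => Encodable.encode (j, t))).Infinite :=
    Set.infinite_range_of_injective hinj
  obtain ⟨m, hm, hm2⟩ := hinf.exists_gt n₀
  obtain ⟨j, rfl⟩ := hm
  refine ⟨Encodable.encode (j, t), le_of_lt hm2, ?_⟩
  rw [σ, Denumerable.ofNat_encode]

attribute [irreducible] σ

/-- The transition relation between consecutive states of the construction. -/
structure Q (m : ℕ) (s s' : ℕ × (ℕ → ℕ → 𝕜)) : Prop where
  q1 : s.1 < s'.1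
  q2 : ∀ j c, s'.1 ≤ c → s'.2 j c = 0
  q3 : ∀ j, m + 1 ≤ j → s'.2 j = 0
  q4 : ∀ j c, c < s.1 → s'.2 j c = s.2 j c
  q5 : ∀ j, j ≠ m → s'.2 j s.1 = s.2 j s.1
  q6 : s'.2 m s.1 = 1
  q7 : (σ m).2.1 ≤ m → 1 ≤ (σ m).2.2.1 → ∃ k,
        (∀ i : Fin (σ m).2.2.1,
          T k (s'.2 (σ m).2.1) i = DD 𝕜 ((σ m).2.2.2.getD i 0)) ∧
        (∀ j, (σ m).2.1 < j → ∀ i : Fin (σ m).2.2.1, T k (s'.2 j) i = 0) ∧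
        (∀ x : ℕ → 𝕜, (∀ c < s'.1, x c = 0) → ∀ i : Fin (σ m).2.2.1, T k x i = 0)

lemma stepEx (h : ∀ N l K : ℕ, 1 ≤ l → ∃ k ≥ K,
      Submodule.span 𝕜
        {v : Fin l → 𝕜 | ∃ j ≥ N, v = fun i : Fin l => T k (Pi.single j 1) (i : ℕ)} = ⊤)
    (m : ℕ) (s : ℕ × (ℕ → ℕ → 𝕜))
    (Hsupp : ∀ j c, s.1 ≤ c → s.2 j c = 0) (Hns : ∀ j, m ≤ j → s.2 j = 0) :
    ∃ s', Q T m s s' := by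
  obtain ⟨P, g⟩ := s
  simp only at Hsupp Hns
  set n := (σ m).2.1 with hn
  set l := (σ m).2.2.1 with hl0
  set L := (σ m).2.2.2 with hL
  set gg : ℕ → ℕ → 𝕜 := Function.update g m (Pi.single P 1) with hgg
  have hggm : gg m = Pi.single P 1 := by simp [hgg]
  have hggj : ∀ j, j ≠ m → gg j = g j := fun j hj => Function.update_of_ne hj _ _
  have hggsupp : ∀ j c, P + 1 ≤ c → gg j c = 0 := by
    intro j c hc
    rcases eq_or_ne j m with rfl | hj
    · rw [hggm, Pi.single_apply, if_neg (by omega)]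
    · rw [hggj j hj]; exact Hsupp j c (by omega)
  have hgglow : ∀ j c, c < P → gg j c = g j c := by
    intro j c hc
    rcases eq_or_ne j m with rfl | hj
    · rw [hggm, Pi.single_apply, if_neg (by omega), Hns _ le_rfl]; rfl
    · rw [hggj j hj]
  by_cases hserve : n ≤ m ∧ 1 ≤ l
  · -- serving case
    obtain ⟨hnm, hl⟩ := hserve
    obtain ⟨k, -, hspan⟩ := h (P+1) l 0 hl
    set tau : ℕ → Fin l → 𝕜 := fun j i =>
      if j = n then DD 𝕜 (L.getD i 0) - T k (gg n) i
      else if n < j ∧ j ≤ m then -(T k (gg j) i) else 0 with htau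
    have hint : ∀ j, ∃ (v : ℕ → 𝕜) (B : ℕ), (∀ c < P+1, v c = 0) ∧ (∀ c ≥ B, v c = 0) ∧
        (∀ i : Fin l, T k v i = tau j i) := fun j => interp T k l (P+1) hspan (tau j)
    choose v B hv1 hv2 hv3 using hint
    set RB := Finset.sup (Finset.range l) (rowB T k) with hRB
    set P' := max (P + 1) (max ((Finset.range (m+1)).sup B) RB) with hP'
    set g' : ℕ → ℕ → 𝕜 := fun j => if j ≤ m then gg j + v j else 0 with hg'
    have hg'le : ∀ j, j ≤ m → g' j = gg j + v j := fun j hj => by simp [hg', hj]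
    have hg'gt : ∀ j, m < j → g' j = 0 := fun j hj => by simp [hg', Nat.not_le.2 hj]
    refine ⟨(P', g'), ?_, ?_, ?_, ?_, ?_, ?_, ?_⟩
    · simp only; omega
    · intro j c hc
      simp only at hc ⊢
      rcases Nat.lt_or_ge m j with hj | hj
      · rw [hg'gt j hj]; rfl
      · rw [hg'le j hj, Pi.add_apply, hggsupp j c (by omega), hv2 j c ?_, add_zero]
        have : B j ≤ (Finset.range (m+1)).sup B := Finset.le_sup (Finset.mem_range.2 (by omega))
        omega
    · intro j hj; exact hg'gt j (by omega)
    · intro j c hc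
      simp only
      rcases Nat.lt_or_ge m j with hj | hj
      · rw [hg'gt j hj, Hns j (by omega)]
      · rw [hg'le j hj, Pi.add_apply, hgglow j c hc, hv1 j c (by omega), add_zero]
    · intro j hj
      simp only
      rcases Nat.lt_or_ge m j with hj' | hj'
      · rw [hg'gt j hj', Hns j (by omega)]
      · rw [hg'le j hj', Pi.add_apply, hggj j hj, hv1 j P (by omega), add_zero]
    · simp only
      rw [hg'le m le_rfl, Pi.add_apply, hggm, hv1 m P (by omega), add_zero,
        Pi.single_eq_same]
    · intro _ _
      refine ⟨k, ?_, ?_, ?_⟩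
      · intro i
        show T k (g' n) (i : ℕ) = DD 𝕜 (L.getD (i : ℕ) 0)
        rw [hg'le n hnm, map_add, Pi.add_apply, hv3 n i]
        have ht : tau n i = DD 𝕜 (L.getD (i : ℕ) 0) - T k (gg n) i := by
          simp [htau]
        rw [ht]; ring
      · intro j hj i
        show T k (g' j) (i : ℕ) = 0
        rcases Nat.lt_or_ge m j with hj' | hj'
        · rw [hg'gt j hj', map_zero]; simp
        · rw [hg'le j hj', map_add, Pi.add_apply, hv3 j i]
          have ht : tau j i = -(T k (gg j) i) := by
            simp [htau, if_neg (by omega : ¬ j = n), (⟨hj, hj'⟩ : n < j ∧ j ≤ m)]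
          rw [ht]; ring
      · intro x hx i
        apply rowB_spec T k i
        intro c hc
        apply hx
        show c < P'
        have h7 : rowB T k i ≤ RB := Finset.le_sup (Finset.mem_range.2 i.2)
        have h8 : RB ≤ P' := le_max_of_le_right (le_max_right _ _)
        omega
  · -- trivial case
    refine ⟨(P + 1, gg), ?_, ?_, ?_, ?_, ?_, ?_, ?_⟩
    · simp
    · intro j c hc
      exact hggsupp j c hc
    · intro j hj
      show gg j = 0
      rw [hggj j (by omega), Hns j (by omega)]
    · intro j c hc
      exact hgglow j c hc
    · intro j hj
      show gg j P = g j P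
      rw [hggj j hj]
    · show gg m P = 1
      rw [hggm, Pi.single_eq_same]
    · intro h1 h2; exact absurd ⟨h1, h2⟩ hserve

variable (h : ∀ N l K : ℕ, 1 ≤ l → ∃ k ≥ K,
      Submodule.span 𝕜
        {v : Fin l → 𝕜 | ∃ j ≥ N, v = fun i : Fin l => T k (Pi.single j 1) (i : ℕ)} = ⊤)

def A (m : ℕ) (s : ℕ × (ℕ → ℕ → 𝕜)) : Prop :=
  (∀ j c, s.1 ≤ c → s.2 j c = 0) ∧ (∀ j, m ≤ j → s.2 j = 0)

noncomputable def StAux (h : ∀ N l K : ℕ, 1 ≤ l → ∃ k ≥ K,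
      Submodule.span 𝕜
        {v : Fin l → 𝕜 | ∃ j ≥ N, v = fun i : Fin l => T k (Pi.single j 1) (i : ℕ)} = ⊤) :
    (m : ℕ) → {s : ℕ × (ℕ → ℕ → 𝕜) // A m s}
  | 0 => ⟨(0, fun _ _ => 0), ⟨fun _ _ _ => rfl, fun _ _ => rfl⟩⟩
  | m+1 =>
    let p := StAux h m
    ⟨Classical.choose (stepEx T h m p.1 p.2.1 p.2.2),
      ⟨(Classical.choose_spec (stepEx T h m p.1 p.2.1 p.2.2)).q2,
       (Classical.choose_spec (stepEx T h m p.1 p.2.1 p.2.2)).q3⟩⟩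

lemma HCstep (m : ℕ) : Q T m (StAux T h m).1 (StAux T h (m+1)).1 :=
  Classical.choose_spec (stepEx T h m (StAux T h m).1 (StAux T h m).2.1 (StAux T h m).2.2)

noncomputable def PP (m : ℕ) : ℕ := (StAux T h m).1.1
noncomputable def GG (m : ℕ) : ℕ → ℕ → 𝕜 := (StAux T h m).1.2

lemma PP_mono : StrictMono (PP T h) :=
  strictMono_nat_of_lt_succ fun m => (HCstep T h m).q1

lemma PP_le (m : ℕ) : m ≤ PP T h m := (PP_mono T h).le_apply

lemma stab {m m' : ℕ} (hmm : m ≤ m') : ∀ j c, c < PP T h m → GG T h m' j c = GG T h m j c := by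
  induction m', hmm using Nat.le_induction with
  | base => intro _ _ _; rfl
  | succ m' hm ih =>
    intro j c hc
    rw [show GG T h (m'+1) j c = GG T h m' j c from
      (HCstep T h m').q4 j c (lt_of_lt_of_le hc ((PP_mono T h).monotone hm)), ih j c hc]

noncomputable def uu (n c : ℕ) : 𝕜 := GG T h (c+1) n c

lemma uu_eq (m n c : ℕ) (hc : c < PP T h m) : uu T h n c = GG T h m n c := by
  rcases le_total m (c+1) with hm | hm
  · exact stab T h hm n c hc
  · exact (stab T h hm n c (lt_of_lt_of_le (Nat.lt_succ_self c) (PP_le T h (c+1)))).symm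

lemma uu_zero (n c : ℕ) (hc : c < PP T h n) : uu T h n c = 0 := by
  rw [uu_eq T h n n c hc]
  exact congrFun ((StAux T h n).2.2 n le_rfl) c

lemma uu_diag (n : ℕ) : uu T h n (PP T h n) = 1 := by
  rw [uu_eq T h (n+1) n (PP T h n) ((PP_mono T h) (Nat.lt_succ_self n))]
  exact (HCstep T h n).q6

lemma uu_off (n n' : ℕ) (hne : n ≠ n') : uu T h n (PP T h n') = 0 := by
  rw [uu_eq T h (n'+1) n (PP T h n') ((PP_mono T h) (Nat.lt_succ_self n'))]
  exact ((HCstep T h n').q5 n hne).trans ((StAux T h n').2.1 n (StAux T h n').1.1 le_rfl)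

noncomputable def Phi : (ℕ → 𝕜) →ₗ[𝕜] (ℕ → 𝕜) where
  toFun c := fun j => ∑ n ∈ Finset.range (j+1), c n * uu T h n j
  map_add' a b := funext fun j => by
    simp [add_mul, Finset.sum_add_distrib]
  map_smul' r a := funext fun j => by
    simp [Finset.mul_sum, mul_assoc]

noncomputable def Psi : (ℕ → 𝕜) →ₗ[𝕜] (ℕ → 𝕜) where
  toFun x := fun n => x (PP T h n)
  map_add' a b := rfl
  map_smul' r a := rfl

lemma PsiPhi (c : ℕ → 𝕜) : Psi T h (Phi T h c) = c := by
  funext n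
  show ∑ n' ∈ Finset.range (PP T h n + 1), c n' * uu T h n' (PP T h n) = c n
  rw [Finset.sum_eq_single n]
  · rw [uu_diag T h n, mul_one]
  · intro n' _ hne
    rw [uu_off T h n' n hne, mul_zero]
  · intro hn
    exact absurd (Finset.mem_range.2 (Nat.lt_succ_of_le (PP_le T h n))) hn

lemma Phi_single (n : ℕ) : Phi T h (Pi.single n 1) = uu T h n := by
  funext j
  show ∑ n' ∈ Finset.range (j+1), (Pi.single n (1:𝕜) : ℕ → 𝕜) n' * uu T h n' j = uu T h n j
  by_cases hnj : n ≤ j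
  · rw [Finset.sum_eq_single n]
    · rw [Pi.single_eq_same, one_mul]
    · intro n' _ hne
      rw [Pi.single_eq_of_ne hne, zero_mul]
    · intro hn
      exact absurd (Finset.mem_range.2 (by omega)) hn
  · rw [Finset.sum_eq_zero, uu_zero T h n j (by have := PP_le T h n; omega)]
    intro n' hn'
    have : n' ≠ n := by simp at hn'; omega
    rw [Pi.single_eq_of_ne this, zero_mul]

lemma M_closed : IsClosed ((LinearMap.range (Phi T h) : Submodule 𝕜 (ℕ → 𝕜)) : Set (ℕ → 𝕜)) := by
  have hset : ((LinearMap.range (Phi T h) : Submodule 𝕜 (ℕ → 𝕜)) : Set (ℕ → 𝕜))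
      = {x | Phi T h (Psi T h x) = x} := by
    ext x
    constructor
    · rintro ⟨c, rfl⟩
      show Phi T h (Psi T h (Phi T h c)) = Phi T h c
      rw [PsiPhi]
    · intro hx
      exact ⟨Psi T h x, hx⟩
  rw [hset]
  apply isClosed_eq ?_ continuous_id
  apply continuous_pi
  intro j
  show Continuous fun x : ℕ → 𝕜 => ∑ n ∈ Finset.range (j+1), x (PP T h n) * uu T h n j
  exact continuous_finset_sum _ fun n _ => (continuous_apply _).mul continuous_const

lemma single_indep : LinearIndependent 𝕜 (fun n : ℕ => (Pi.single n 1 : ℕ → 𝕜)) := by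
  rw [linearIndependent_iff']
  intro s g hsum i hi
  have h1 := congrFun hsum i
  simp only [Finset.sum_apply, Pi.smul_apply, Pi.zero_apply, smul_eq_mul,
    Pi.single_apply] at h1
  rw [Finset.sum_eq_single i] at h1
  · simpa using h1
  · intro n' _ hne
    rw [if_neg (Ne.symm hne), mul_zero]
  · intro hn; exact absurd hi hn

lemma M_not_finite : ¬ Module.Finite 𝕜 (LinearMap.range (Phi T h)) := by
  intro hfin
  set M := LinearMap.range (Phi T h) with hM
  have hmem : ∀ n, uu T h n ∈ M := fun n => ⟨Pi.single n 1, Phi_single T h n⟩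
  have hcomp : (⇑(Psi T h ∘ₗ M.subtype) ∘ fun n : ℕ => (⟨uu T h n, hmem n⟩ : M))
      = fun n : ℕ => (Pi.single n 1 : ℕ → 𝕜) := by
    funext n
    show Psi T h (uu T h n) = Pi.single n 1
    funext j
    show uu T h n (PP T h j) = (Pi.single n (1:𝕜) : ℕ → 𝕜) j
    rcases eq_or_ne n j with rfl | hne
    · rw [uu_diag, Pi.single_eq_same]
    · rw [uu_off T h n j hne, Pi.single_eq_of_ne (Ne.symm hne)]
  have hli : LinearIndependent 𝕜 (fun n : ℕ => (⟨uu T h n, hmem n⟩ : M)) := by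
    apply LinearIndependent.of_comp (Psi T h ∘ₗ M.subtype)
    rw [hcomp]
    exact single_indep
  have : Finite ℕ := hli.finite
  exact @not_finite ℕ _ this

lemma main_hit (c0 : ℕ → 𝕜) (n : ℕ) (hmin : ∀ n' < n, c0 n' = 0)
    (l : ℕ) (hl : 1 ≤ l) (f : Fin l → ℕ) :
    ∃ k, ∀ i : Fin l, T k (Phi T h c0) i = c0 n * DD 𝕜 (f i) := by
  obtain ⟨m, hm, hσ⟩ := exists_stage (n, l, List.ofFn f) n
  have hq7 := (HCstep T h m).q7
  rw [hσ] at hq7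
  obtain ⟨k, ha, hb, hc⟩ := hq7 hm hl
  -- all hypotheses now about `Fin l`, `n`, `List.ofFn f`
  refine ⟨k, fun i => ?_⟩
  set B := PP T h (m+1) with hB
  have hmB : m + 1 ≤ B := PP_le T h (m+1)
  -- the truncated sum
  set y : ℕ → 𝕜 := ∑ n' ∈ Finset.range B, c0 n' • uu T h n' with hy
  have hxy : ∀ jc, jc < B → Phi T h c0 jc = y jc := by
    intro jc hjc
    show ∑ n' ∈ Finset.range (jc+1), c0 n' * uu T h n' jc = y jc
    rw [hy, Finset.sum_apply]
    apply Finset.sum_subset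
    · intro a ha'
      simp only [Finset.mem_range] at ha' ⊢
      omega
    · intro a _ ha2
      simp only [Finset.mem_range, not_lt] at ha2
      rw [uu_zero T h a jc (by have := PP_le T h a; omega), mul_zero]
  -- tail of u-vectors
  have hud : ∀ n', n' < B → T k (uu T h n') i =
      T k (GG T h (m+1) n') i := by
    intro n' _
    have hdiff : T k (uu T h n' - GG T h (m+1) n') i = 0 := by
      apply hc
      intro cc hcc
      show uu T h n' cc - GG T h (m+1) n' cc = 0
      rw [uu_eq T h (m+1) n' cc hcc, sub_self]
    rw [map_sub] at hdiff
    simp only [Pi.sub_apply] at hdiff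
    exact sub_eq_zero.mp hdiff
  have hxys : T k (Phi T h c0) i = T k y i := by
    have hdiff : T k (Phi T h c0 - y) i = 0 := by
      apply hc
      intro cc hcc
      show Phi T h c0 cc - y cc = 0
      rw [hxy cc hcc, sub_self]
    rw [map_sub] at hdiff
    simp only [Pi.sub_apply] at hdiff
    exact sub_eq_zero.mp hdiff
  have hTy : T k y i = ∑ n' ∈ Finset.range B, c0 n' * T k (uu T h n') i := by
    rw [hy, map_sum, Finset.sum_apply]
    apply Finset.sum_congr rfl
    intro a _
    rw [map_smul]
    simp
  have hgetD : (List.ofFn f).getD (i : ℕ) 0 = f i := by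
    rw [List.getD_eq_getElem _ _ (by simpa using i.2)]
    simp
  rw [hxys, hTy, Finset.sum_eq_single n]
  · rw [hud n (by omega)]
    have han : T k (GG T h (m+1) n) i = DD 𝕜 ((List.ofFn f).getD (i : ℕ) 0) := ha i
    rw [han, hgetD]
  · intro n' hn' hne
    rcases Nat.lt_or_ge n' n with hlt | hge
    · rw [hmin n' hlt, zero_mul]
    · have hgt : n < n' := by omega
      rw [hud n' (Finset.mem_range.1 hn')]
      have hbn : T k (GG T h (m+1) n') i = 0 := hb n' hgt i
      rw [hbn, mul_zero]
  · intro hn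
    exact absurd (Finset.mem_range.2 (by omega)) hn

lemma M_dense (x : ℕ → 𝕜) (hx : x ∈ LinearMap.range (Phi T h)) (hx0 : x ≠ 0) :
    Dense (Set.range fun k => T k x) := by
  obtain ⟨c0, rfl⟩ := hx
  have hc0 : ∃ n, c0 n ≠ 0 := by
    by_contra hc
    push_neg at hc
    exact hx0 (by rw [show c0 = 0 from funext hc, map_zero])
  set n := Nat.find hc0 with hn
  have hnne : c0 n ≠ 0 := Nat.find_spec hc0
  have hmin : ∀ n' < n, c0 n' = 0 := fun n' hn' => by
    by_contra hne
    exact absurd (Nat.find_le hne) (not_le.2 hn')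
  intro z
  rw [mem_closure_iff_nhds]
  intro U hU
  rw [nhds_pi, Filter.mem_pi] at hU
  obtain ⟨I, hIfin, t, ht, hsub⟩ := hU
  obtain ⟨b, hb⟩ := hIfin.bddAbove
  set l := b + 1 with hldef
  have hfi : ∀ i : Fin l, ∃ q : ℕ, ((i : ℕ) ∈ I → c0 n * DD 𝕜 q ∈ t i) := by
    intro i
    by_cases hiI : (i : ℕ) ∈ I
    · have hti : t (i : ℕ) ∈ 𝓝 (z i) := ht i
      have himg : c0 n * (z i / c0 n) = z i := by
        field_simp
      have hpre : (fun a : 𝕜 => c0 n * a) ⁻¹' (t i) ∈ 𝓝 (z i / c0 n) := by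
        apply (continuous_const.mul continuous_id).continuousAt.preimage_mem_nhds
        simpa [himg] using hti
      obtain ⟨q, hq⟩ := (DD_dense 𝕜).exists_mem_open isOpen_interior
        ⟨z i / c0 n, mem_interior_iff_mem_nhds.2 hpre⟩
      exact ⟨q, fun _ => Set.mem_preimage.mp (interior_subset hq)⟩
    · exact ⟨0, fun hmem => absurd hmem hiI⟩
  choose φ hφ using hfi
  obtain ⟨k, hk⟩ := main_hit T h c0 n hmin l (by omega) φ
  refine ⟨T k (Phi T h c0), ?_, ⟨k, rfl⟩⟩
  apply hsub
  intro i hiI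
  have hib : i < l := by have := hb hiI; omega
  have h1 := hk ⟨i, hib⟩
  have h2 := hφ ⟨i, hib⟩ hiI
  show T k (Phi T h c0) i ∈ t i
  rw [show ((⟨i, hib⟩ : Fin l) : ℕ) = i from rfl] at h1
  rw [h1]
  exact h2

end HCAux

open HCAux in
/-- Sufficient condition for a sequence of operators on `ω = 𝕜^ℕ` to possess a hypercyclic
subspace: for all `N, l ≥ 1, K` there is `k ≥ K` with the truncated columns
`(T k e j)_{i < l}`, `j ≥ N`, spanning all of `𝕜^l`. -/
theorem hypercyclic_subspace_of_spanning_truncated_columns {𝕜 : Type*} [RCLike 𝕜]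
    (T : ℕ → (ℕ → 𝕜) →L[𝕜] (ℕ → 𝕜))
    (h : ∀ N l K : ℕ, 1 ≤ l → ∃ k ≥ K,
      Submodule.span 𝕜
        {v : Fin l → 𝕜 | ∃ j ≥ N, v = fun i : Fin l => T k (Pi.single j 1) (i : ℕ)} = ⊤) :
    ∃ M : Submodule 𝕜 (ℕ → 𝕜), IsClosed (M : Set (ℕ → 𝕜)) ∧ ¬ Module.Finite 𝕜 M ∧
      ∀ x ∈ M, x ≠ 0 → Dense (Set.range fun k => T k x) := by
  exact ⟨LinearMap.range (Phi T h), M_closed T h, M_not_finite T h,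
    fun x hx hx0 => M_dense T h x hx hx0⟩
end

section
/- Let T : ω → ω be a continuous linear operator with matrix (a_{i,j})_{i,j≥0}, and let c_i be the smallest index such that a_{i,j} = 0 for all j ≥ c_i. If c_i > i+1 for every i ≥ 0 and c_i ≠ c_j whenever i ≠ j, then T possesses a hypercyclic subspace. -/
/-!
Continuity on `ω` makes every coordinate of `T ^ N x` depend on finitely many coordinates
of `x`. Because the row lengths `c i` are distinct and exceed `i + 1`, for a nonzero functional
`φ` the longest row seen by `φ` survives in `φ ∘ T` and moves the support of `φ` strictly to
the right; iterating, `φ ∘ T ^ N` does not vanish at some `e j` with `j ≥ N`. By duality, `T ^ N`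
maps the finitely supported vectors living in `[N, ∞)` onto every finite section `𝕜 ^ m`.

This lets one build inductively vectors `u t = e (μ t) + (corrections beyond μ t)`: at step `k`,
every `u t` with `t ≤ k` receives a correction far to the right so that `T ^ (N k) (u t)` equals,
on the first `k` coordinates, `q k` if `t = s k` and `0` otherwise, while all later corrections
are invisible there. The markers `μ t` turn `α ↦ ∑ α t • u t` into an embedding of `ω` with
closed range. If every pair (index, element of a dense sequence) occurs as `(s k, q k)` for
infinitely many `k`, the orbit of `∑ α t • u t` with `α t₀ ≠ 0` comes close to every `α t₀ • q`,
hence is dense.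
-/

open Filter Topology Function

section FiniteDependence

variable {𝕜 : Type*} [NontriviallyNormedField 𝕜]

namespace ContinuousLinearMap

/-- `φ` is bounded on a basic neighbourhood of `0`, which contains the subspace of vectors
vanishing on finitely many coordinates; a functional bounded on a subspace vanishes on it. -/
theorem exists_dependsOn_Iio (φ : (ℕ → 𝕜) →L[𝕜] 𝕜) : ∃ b, DependsOn φ (Set.Iio b) := by
  have hball : φ ⁻¹' Metric.ball 0 1 ∈ 𝓝 (0 : ℕ → 𝕜) :=
    φ.continuous.continuousAt.preimage_mem_nhds
      (by simpa using Metric.ball_mem_nhds (0 : 𝕜) one_pos)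
  rw [nhds_pi, Filter.mem_pi] at hball
  obtain ⟨I, hI, V, hV, hIV⟩ := hball
  obtain ⟨b, hb⟩ := hI.bddAbove
  refine ⟨b + 1, fun x y hxy => sub_eq_zero.mp ?_⟩
  rw [← map_sub]
  by_contra hne
  obtain ⟨r, hr⟩ := NormedField.exists_lt_norm 𝕜 (‖φ (x - y)‖⁻¹)
  have hmem : r • (x - y) ∈ Set.pi I V := fun j hj => by
    simpa [sub_eq_zero.mpr (hxy j (Nat.lt_succ_of_le (hb hj)))] using mem_of_mem_nhds (hV j)
  have hlt : ‖r‖ * ‖φ (x - y)‖ < 1 := by simpa [norm_smul] using hIV hmem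
  have hpos : 0 < ‖φ (x - y)‖ := norm_pos_iff.mpr hne
  rw [inv_lt_iff_one_lt_mul₀ hpos] at hr
  linarith

theorem apply_eq_sum_of_dependsOn {φ : (ℕ → 𝕜) →L[𝕜] 𝕜} {b : ℕ} (hb : DependsOn φ (Set.Iio b))
    (x : ℕ → 𝕜) : φ x = ∑ j ∈ Finset.range b, x j * φ (Pi.single j 1) := by
  have hx : φ x = φ (∑ j ∈ Finset.range b, x j • Pi.single j 1) := hb fun j hj => by
    simp [Finset.sum_apply, Pi.single_apply, Set.mem_Iio.mp hj]
  simp [hx, map_sum]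

theorem apply_single_eq_zero_of_dependsOn {φ : (ℕ → 𝕜) →L[𝕜] 𝕜} {b j : ℕ}
    (hb : DependsOn φ (Set.Iio b)) (hj : b ≤ j) : φ (Pi.single j 1) = 0 := by
  rw [← φ.map_zero]
  exact hb fun i hi => Pi.single_eq_of_ne (by simp at hi; omega) _

end ContinuousLinearMap

theorem exists_forall_lt_dependsOn_Iio (S : (ℕ → 𝕜) →L[𝕜] (ℕ → 𝕜)) (m : ℕ) :
    ∃ b, ∀ i < m, DependsOn (fun x => S x i) (Set.Iio b) := by
  induction m with
  | zero => exact ⟨0, fun i hi => absurd hi i.not_lt_zero⟩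
  | succ m ih =>
    obtain ⟨b, hb⟩ := ih
    obtain ⟨b', hb'⟩ := ((ContinuousLinearMap.proj m).comp S).exists_dependsOn_Iio
    refine ⟨max b b', fun i hi => ?_⟩
    rcases Nat.lt_succ_iff_lt_or_eq.mp hi with hi | rfl
    · exact (hb i hi).mono (Set.Iio_subset_Iio (le_max_left _ _))
    · exact hb'.mono (Set.Iio_subset_Iio (le_max_right _ _))

end FiniteDependence

def TailSurjective {𝕜 : Type*} [Field 𝕜] [TopologicalSpace 𝕜]
    (T : (ℕ → 𝕜) →L[𝕜] (ℕ → 𝕜)) : Prop :=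
  ∀ N m (y : ℕ → 𝕜), ∃ v : ℕ →₀ 𝕜, (∀ j ∈ v.support, N ≤ j) ∧ ∀ i < m, (T ^ N) v i = y i

theorem ne_zero_of_isLeast_eventually_zero {M : Type*} [Zero M] {f : ℕ → M} {n : ℕ}
    (h : IsLeast {m | ∀ j, m ≤ j → f j = 0} n) (hn : 0 < n) : f (n - 1) ≠ 0 := fun h0 => by
  have := h.2 fun j hj => (Nat.eq_or_lt_of_le hj).elim (· ▸ h0) fun hlt => h.1 j (by omega)
  omega

section RowLengths

variable {𝕜 : Type*} [NontriviallyNormedField 𝕜] (T : (ℕ → 𝕜) →L[𝕜] (ℕ → 𝕜)) {c : ℕ → ℕ}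
  (hc : ∀ i, IsLeast {m : ℕ | ∀ j, m ≤ j → T (Pi.single j 1) i = 0} (c i))
  (hlen : ∀ i, i + 1 < c i) (hinj : Injective c)

include hc hlen hinj in
/-- Among the rows `i` seen by `φ`, the one of maximal length `c i` is unique, so its last
nonzero entry, in column `c i - 1 > i`, survives in `φ ∘ T`. -/
theorem exists_gt_apply_single_ne_zero (φ : (ℕ → 𝕜) →L[𝕜] 𝕜) {j : ℕ}
    (hj : φ (Pi.single j 1) ≠ 0) : ∃ j' > j, φ (T (Pi.single j' 1)) ≠ 0 := by
  classical
  obtain ⟨b, hb⟩ := φ.exists_dependsOn_Iio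
  set S := (Finset.range b).filter fun i => φ (Pi.single i 1) ≠ 0
  have hjS : j ∈ S := by
    refine Finset.mem_filter.mpr ⟨Finset.mem_range.mpr ?_, hj⟩
    by_contra hjb
    exact hj (φ.apply_single_eq_zero_of_dependsOn hb (not_lt.mp hjb))
  obtain ⟨i₀, hi₀S, hi₀max⟩ := S.exists_max_image c ⟨j, hjS⟩
  have hlt : ∀ i ∈ S, i ≠ i₀ → c i < c i₀ := fun i hi hne =>
    lt_of_le_of_ne (hi₀max i hi) (fun h => hne (hinj h))
  refine ⟨c i₀ - 1, by have := hi₀max j hjS; have := hlen j; omega, ?_⟩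
  rw [φ.apply_eq_sum_of_dependsOn hb,
    Finset.sum_eq_single_of_mem i₀ (Finset.mem_filter.mp hi₀S).1 fun i hi hne => ?_]
  · exact mul_ne_zero (ne_zero_of_isLeast_eventually_zero (hc i₀) (by have := hlen i₀; omega))
      (Finset.mem_filter.mp hi₀S).2
  · by_cases hφi : φ (Pi.single i 1) = 0
    · rw [hφi, mul_zero]
    · have := hlt i (Finset.mem_filter.mpr ⟨hi, hφi⟩) hne
      rw [(hc i).1 _ (by omega), zero_mul]

include hc hlen hinj in
theorem exists_ge_pow_apply_single_ne_zero (φ : (ℕ → 𝕜) →L[𝕜] 𝕜) {j : ℕ}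
    (hj : φ (Pi.single j 1) ≠ 0) (N : ℕ) : ∃ j' ≥ N, φ ((T ^ N) (Pi.single j' 1)) ≠ 0 := by
  induction N with
  | zero => exact ⟨j, Nat.zero_le j, by simpa using hj⟩
  | succ N ih =>
    obtain ⟨j', hj'N, hj'⟩ := ih
    obtain ⟨j'', hj''j', hj''⟩ :=
      exists_gt_apply_single_ne_zero T hc hlen hinj (φ.comp (T ^ N)) hj'
    exact ⟨j'', by omega, by simpa [pow_succ] using hj''⟩

include hc hlen hinj in
theorem exists_ge_apply_pow_single_ne_zero {m : ℕ} {f : (Fin m → 𝕜) →ₗ[𝕜] 𝕜} (hf : f ≠ 0)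
    (N : ℕ) : ∃ j ≥ N, f (fun i : Fin m => (T ^ N) (Pi.single j 1) i) ≠ 0 := by
  classical
  let φ : (ℕ → 𝕜) →L[𝕜] 𝕜 :=
    ⟨f ∘ₗ LinearMap.pi fun i : Fin m => LinearMap.proj (i : ℕ),
      f.continuous_on_pi.comp (continuous_pi fun i => continuous_apply _)⟩
  obtain ⟨i, hi⟩ : ∃ i : Fin m, f (Pi.single i 1) ≠ 0 := by
    by_contra! h
    exact hf (LinearMap.pi_ext' fun i => LinearMap.ext_ring (h i))
  have hφi : φ (Pi.single i 1) = f (Pi.single i 1) :=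
    congrArg f (funext fun i' => by simp [Pi.single_apply, Fin.val_inj])
  exact exists_ge_pow_apply_single_ne_zero T hc hlen hinj φ (hφi ▸ hi) N

include hc hlen hinj in
theorem tailSurjective_of_rowLengths : TailSurjective T := by
  intro N m y
  let G : (ℕ →₀ 𝕜) →ₗ[𝕜] (Fin m → 𝕜) :=
    (LinearMap.pi fun i : Fin m => ((ContinuousLinearMap.proj (i : ℕ)).comp (T ^ N)).toLinearMap)
      ∘ₗ Finsupp.lcoeFun
  suffices hG : (Finsupp.supported 𝕜 𝕜 (Set.Ici N)).map G = ⊤ by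
    obtain ⟨v, hv, hvy⟩ := hG.ge (Submodule.mem_top (x := fun i : Fin m => y i))
    exact ⟨v, fun j hj => (Finsupp.mem_supported 𝕜 v).mp hv hj,
      fun i hi => congrFun hvy ⟨i, hi⟩⟩
  by_contra hG
  obtain ⟨f, hf, hker⟩ := Submodule.exists_le_ker_of_lt_top _ (lt_top_iff_ne_top.mpr hG)
  obtain ⟨j, hjN, hj⟩ := exists_ge_apply_pow_single_ne_zero T hc hlen hinj hf N
  have hGj : G (Finsupp.single j 1) = fun i : Fin m => (T ^ N) (Pi.single j 1) i :=
    funext fun i => by rw [← Finsupp.single_eq_pi_single]; rfl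
  refine hj (hGj ▸ LinearMap.mem_ker.mp (hker (Submodule.mem_map_of_mem ?_)))
  exact Finsupp.single_mem_supported 𝕜 _ (Set.mem_Ici.mpr hjN)

end RowLengths

/-- `vec t` is the part of the `t`-th generator built so far; `frontier` bounds all its supports
and is the marker coordinate of the next generator. -/
structure Stage (𝕜 : Type*) where
  frontier : ℕ
  vec : ℕ → ℕ → 𝕜

section Construction

variable {𝕜 : Type*} [NontriviallyNormedField 𝕜]

structure IsNextStage (T : (ℕ → 𝕜) →L[𝕜] (ℕ → 𝕜)) (s : ℕ → ℕ) (q : ℕ → ℕ → 𝕜) (k : ℕ)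
    (S S' : Stage 𝕜) : Prop where
  frontier_lt : S.frontier < S'.frontier
  vec_of_lt : ∀ t j, j < S.frontier → S'.vec t j = S.vec t j
  vec_of_ge : ∀ t j, S'.frontier ≤ j → S'.vec t j = S.vec t j
  vec_frontier : ∀ t, S'.vec t S.frontier = S.vec t S.frontier + if t = k then 1 else 0
  vec_of_gt : ∀ t, k < t → S'.vec t = S.vec t
  pow_vec : ∀ t ≤ k, ∀ i < k, (T ^ (S.frontier + 1)) (S'.vec t) i = if t = s k then q k i else 0
  dependsOn : ∀ i < k, DependsOn (fun x => (T ^ (S.frontier + 1)) x i) (Set.Iio S'.frontier)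

variable {T : (ℕ → 𝕜) →L[𝕜] (ℕ → 𝕜)} (hT : TailSurjective T) (s : ℕ → ℕ) (q : ℕ → ℕ → 𝕜)

include hT in
/-- The corrections come from `TailSurjective` at time `R + 1`, so they live beyond the old
frontier `R`, which becomes the marker of the `k`-th generator; the new frontier lies beyond their
supports and beyond the coordinates on which the first `k` coordinates of `T ^ (R + 1)` depend. -/
theorem exists_isNextStage (k : ℕ) (S : Stage 𝕜) : ∃ S', IsNextStage T s q k S S' := by
  classical
  set R := S.frontier
  let base : ℕ → ℕ → 𝕜 := fun t => S.vec t + Pi.single R (if t = k then 1 else 0)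
  choose v hv_supp hv_pow using fun t =>
    hT (R + 1) k fun i => (if t = s k then q k i else 0) - (T ^ (R + 1)) (base t) i
  let v' : ℕ → ℕ →₀ 𝕜 := fun t => if t ≤ k then v t else 0
  have hv'_le : ∀ t j, j ≤ R → v' t j = 0 := fun t j hj => by
    by_cases ht : t ≤ k
    · simpa [v', ht] using mt (hv_supp t j) (by omega)
    · simp [v', ht]
  obtain ⟨b, hb⟩ := exists_forall_lt_dependsOn_Iio (T ^ (R + 1)) k
  obtain ⟨B, hB⟩ := ((Finset.range (k + 1)).biUnion fun t => (v t).support).bddAbove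
  have hv'_gt : ∀ t j, B < j → v' t j = 0 := fun t j hj => by
    by_cases ht : t ≤ k
    · simp only [v', if_pos ht]
      refine Finsupp.notMem_support_iff.mp fun hj' => hj.not_ge (hB ?_)
      exact Finset.mem_biUnion.mpr ⟨t, Finset.mem_range.mpr (by omega), hj'⟩
    · simp [v', ht]
  set R' := max (max b (R + 1)) (B + 1)
  refine ⟨⟨R', fun t => base t + v' t⟩, ?_, ?_, ?_, ?_, ?_, ?_, ?_⟩
  · show R < R'
    omega
  · intro t j (hj : j < R)
    simp [base, hv'_le t j hj.le, Pi.single_eq_of_ne hj.ne]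
  · intro t j (hj : R' ≤ j)
    simp [base, hv'_gt t j (by omega), show j ≠ R by omega]
  · intro t
    simp [base, hv'_le t R le_rfl, R]
  · intro t ht
    funext j
    simp [base, v', ht.ne', not_le.mpr ht]
  · intro t ht i hi
    simp only [v', if_pos ht]
    rw [map_add, Pi.add_apply, hv_pow t i hi, add_sub_cancel]
  · intro i hi
    exact (hb i hi).mono (Set.Iio_subset_Iio (show b ≤ R' by omega))

noncomputable def stage : ℕ → Stage 𝕜
  | 0 => ⟨0, 0⟩
  | k + 1 => (exists_isNextStage hT s q k (stage k)).choose

theorem isNextStage_stage (k : ℕ) :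
    IsNextStage T s q k (stage hT s q k) (stage hT s q (k + 1)) :=
  (exists_isNextStage hT s q k (stage hT s q k)).choose_spec

/-- The marker coordinate of the `k`-th generator; `T ^ (marker k + 1)` realizes the `k`-th
target. -/
noncomputable def marker (k : ℕ) : ℕ := (stage hT s q k).frontier

theorem marker_strictMono : StrictMono (marker hT s q) :=
  strictMono_nat_of_lt_succ fun k => (isNextStage_stage hT s q k).frontier_lt

theorem stage_vec_of_frontier_le {k j : ℕ} (hj : marker hT s q k ≤ j) (t : ℕ) :
    (stage hT s q k).vec t j = 0 := by
  induction k generalizing j with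
  | zero => rfl
  | succ k ih =>
    rw [(isNextStage_stage hT s q k).vec_of_ge t j hj]
    exact ih ((marker_strictMono hT s q k.lt_succ_self).le.trans hj)

theorem stage_vec_of_le {k t : ℕ} (ht : k ≤ t) : (stage hT s q k).vec t = 0 := by
  induction k with
  | zero => rfl
  | succ k ih => rw [(isNextStage_stage hT s q k).vec_of_gt t ht, ih (by omega)]

theorem stage_vec_eq_of_le {k k' j : ℕ} (hj : j < marker hT s q k) (hk : k ≤ k') (t : ℕ) :
    (stage hT s q k').vec t j = (stage hT s q k).vec t j := by
  induction k', hk using Nat.le_induction with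
  | base => rfl
  | succ k' hk ih =>
    rw [(isNextStage_stage hT s q k').vec_of_lt t j
      (hj.trans_le ((marker_strictMono hT s q).monotone hk)), ih]

/-- The coordinatewise limit of the stages: coordinate `j` no longer changes after stage `j + 1`. -/
noncomputable def generator (t : ℕ) : ℕ → 𝕜 := fun j => (stage hT s q (j + 1)).vec t j

theorem generator_apply_of_lt_marker {k j : ℕ} (hj : j < marker hT s q k) (t : ℕ) :
    generator hT s q t j = (stage hT s q k).vec t j := by
  have hj' : j < marker hT s q (j + 1) := (marker_strictMono hT s q).id_le (j + 1)
  rw [generator, ← stage_vec_eq_of_le hT s q hj' (le_max_right k (j + 1)),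
    stage_vec_eq_of_le hT s q hj (le_max_left k (j + 1))]

theorem generator_apply_of_lt {t j : ℕ} (hj : j < marker hT s q t) : generator hT s q t j = 0 := by
  rw [generator_apply_of_lt_marker hT s q hj, stage_vec_of_le hT s q le_rfl, Pi.zero_apply]

theorem generator_apply_marker (t t' : ℕ) :
    generator hT s q t (marker hT s q t') = if t = t' then 1 else 0 := by
  rw [generator_apply_of_lt_marker hT s q (marker_strictMono hT s q (Nat.lt_add_one t')), marker,
    (isNextStage_stage hT s q t').vec_frontier,
    stage_vec_of_frontier_le hT s q (le_refl (stage hT s q t').frontier), zero_add]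

theorem pow_generator_apply {k i : ℕ} (hs : s k ≤ k) (hi : i < k) (t : ℕ) :
    (T ^ (marker hT s q k + 1)) (generator hT s q t) i = if t = s k then q k i else 0 := by
  have hstep := isNextStage_stage hT s q k
  refine (hstep.dependsOn i hi (x := generator hT s q t) (y := (stage hT s q (k + 1)).vec t)
    fun j hj => generator_apply_of_lt_marker hT s q hj t).trans ?_
  rcases le_or_gt t k with ht | ht
  · exact hstep.pow_vec t ht i hi
  · simp only [hstep.vec_of_gt t ht, stage_vec_of_le hT s q ht.le, map_zero, Pi.zero_apply]
    exact (if_neg (by omega)).symm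

/-- `α ↦ ∑ t, α t • generator t`; the sum is locally finite since `generator t` vanishes below
`marker t ≥ t`. -/
noncomputable def synthesis : (ℕ → 𝕜) →L[𝕜] (ℕ → 𝕜) :=
  ContinuousLinearMap.pi fun j =>
    ∑ t ∈ Finset.range (j + 1), generator hT s q t j • ContinuousLinearMap.proj t

theorem hasSum_synthesis (α : ℕ → 𝕜) :
    HasSum (fun t => α t • generator hT s q t) (synthesis hT s q α) := by
  refine Pi.hasSum.mpr fun j => ?_
  have hj : synthesis hT s q α j = ∑ t ∈ Finset.range (j + 1), (α t • generator hT s q t) j := by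
    simp [synthesis, mul_comm]
  rw [hj]
  refine hasSum_sum_of_ne_finset_zero fun t ht => ?_
  rw [Finset.mem_range, not_lt] at ht
  rw [Pi.smul_apply, generator_apply_of_lt hT s q (ht.trans ((marker_strictMono hT s q).id_le t)),
    smul_zero]

theorem synthesis_apply_marker (α : ℕ → 𝕜) (t : ℕ) :
    synthesis hT s q α (marker hT s q t) = α t := by
  have h := (Pi.hasSum.mp (hasSum_synthesis hT s q α)) (marker hT s q t)
  refine (h.unique (hasSum_single t fun t' ht' => ?_)).trans ?_ <;>
    simp_all [generator_apply_marker]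

theorem pow_synthesis_apply {k i : ℕ} (hs : s k ≤ k) (hi : i < k) (α : ℕ → 𝕜) :
    (T ^ (marker hT s q k + 1)) (synthesis hT s q α) i = α (s k) * q k i := by
  have h := (Pi.hasSum.mp ((T ^ (marker hT s q k + 1)).hasSum (hasSum_synthesis hT s q α))) i
  simp only [map_smul, Pi.smul_apply, smul_eq_mul, pow_generator_apply hT s q hs hi] at h
  refine (h.unique (hasSum_single (s k) fun t ht => ?_)).trans ?_ <;> simp_all

theorem isClosed_range_synthesis :
    IsClosed (LinearMap.range (synthesis hT s q : (ℕ → 𝕜) →ₗ[𝕜] (ℕ → 𝕜)) : Set (ℕ → 𝕜)) := by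
  rw [LinearMap.coe_range]
  exact Function.LeftInverse.isClosed_range (f := fun x t => x (marker hT s q t))
    (fun α => funext (synthesis_apply_marker hT s q α))
    (continuous_pi fun t => continuous_apply _) (synthesis hT s q).continuous

theorem injective_synthesis : Injective (synthesis hT s q) := fun α β h =>
  funext fun t => by rw [← synthesis_apply_marker hT s q α, h, synthesis_apply_marker]

theorem not_finite_range_synthesis :
    ¬ Module.Finite 𝕜 (LinearMap.range (synthesis hT s q : (ℕ → 𝕜) →ₗ[𝕜] (ℕ → 𝕜))) := by
  intro hfin
  have : Module.Finite 𝕜 (ℕ → 𝕜) :=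
    Module.Finite.of_injective _
      ((LinearMap.injective_rangeRestrict_iff _).mpr (injective_synthesis hT s q))
  exact Module.Finite.not_linearIndependent_of_infinite _ (Pi.linearIndependent_single_one ℕ 𝕜)

theorem dense_range_pow_synthesis
    (hsq : ∀ t (W : Set (ℕ → 𝕜)), IsOpen W → W.Nonempty → ∃ᶠ k in atTop, s k = t ∧ q k ∈ W)
    {α : ℕ → 𝕜} (hα : α ≠ 0) : Dense (Set.range fun n => (T ^ n) (synthesis hT s q α)) := by
  obtain ⟨t, ht⟩ : ∃ t, α t ≠ 0 := Function.ne_iff.mp hα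
  refine dense_iff_inter_open.mpr fun U hU ⟨z, hz⟩ => ?_
  obtain ⟨I, u, hu, hIU⟩ := isOpen_pi_iff.mp hU z hz
  have hW : IsOpen ((α t • ·) ⁻¹' (I : Set ℕ).pi u) :=
    (isOpen_set_pi I.finite_toSet fun i hi => (hu i hi).1).preimage (continuous_const_smul _)
  obtain ⟨k, hk, rfl, hqk⟩ := ((frequently_atTop.mp (hsq t _ hW
    ⟨(α t)⁻¹ • z, by simpa [smul_inv_smul₀ ht] using fun i hi => (hu i hi).2⟩)) (t + I.sup id + 1))
  refine ⟨_, hIU fun i hi => ?_, marker hT s q k + 1, rfl⟩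
  show (T ^ (marker hT s q k + 1)) (synthesis hT s q α) i ∈ u i
  rw [pow_synthesis_apply hT s q (by omega) ?_]
  · exact hqk i hi
  · have := Finset.le_sup (f := id) hi
    simp only [id] at this
    omega

end Construction

theorem exists_seq_frequently_mem_open (X : Type*) [TopologicalSpace X]
    [TopologicalSpace.SeparableSpace X] [Nonempty X] :
    ∃ (s : ℕ → ℕ) (q : ℕ → X),
      ∀ t (W : Set X), IsOpen W → W.Nonempty → ∃ᶠ k in atTop, s k = t ∧ q k ∈ W := by
  refine ⟨fun k => (Nat.unpair (Nat.unpair k).1).1,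
    fun k => TopologicalSpace.denseSeq X (Nat.unpair (Nat.unpair k).1).2, fun t W hW hWne => ?_⟩
  obtain ⟨d, hd⟩ := (TopologicalSpace.denseRange_denseSeq X).exists_mem_open hW hWne
  refine frequently_atTop.mpr fun B => ⟨Nat.pair (Nat.pair t d) B, Nat.right_le_pair _ _, ?_⟩
  simpa using hd

theorem exists_hypercyclic_subspace_of_tailSurjective {𝕜 : Type*} [NontriviallyNormedField 𝕜]
    [TopologicalSpace.SeparableSpace 𝕜] {T : (ℕ → 𝕜) →L[𝕜] (ℕ → 𝕜)} (hT : TailSurjective T) :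
    ∃ M : Submodule 𝕜 (ℕ → 𝕜), IsClosed (M : Set (ℕ → 𝕜)) ∧ ¬ Module.Finite 𝕜 M ∧
      ∀ x ∈ M, x ≠ 0 → Dense (Set.range fun n : ℕ => (T ^ n) x) := by
  obtain ⟨s, q, hsq⟩ := exists_seq_frequently_mem_open (ℕ → 𝕜)
  refine ⟨_, isClosed_range_synthesis hT s q, not_finite_range_synthesis hT s q, ?_⟩
  rintro _ ⟨α, rfl⟩ hx
  exact dense_range_pow_synthesis hT s q hsq fun hα => hx (by simp [hα])

/-- If `T` is a continuous linear operator on `ω = 𝕜^ℕ` whose matrix has rows of lengths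
`c i` (i.e. `c i` is the least index beyond which the `i`-th row vanishes) with
`c i > i + 1` for every `i` and `c` injective, then `T` has a hypercyclic subspace. -/
theorem hypercyclic_subspace_of_row_lengths {𝕜 : Type*} [RCLike 𝕜]
    (T : (ℕ → 𝕜) →L[𝕜] (ℕ → 𝕜)) (c : ℕ → ℕ)
    (hc : ∀ i, IsLeast {m : ℕ | ∀ j, m ≤ j → T (Pi.single j 1) i = 0} (c i))
    (h1 : ∀ i, i + 1 < c i) (h2 : Function.Injective c) :
    ∃ M : Submodule 𝕜 (ℕ → 𝕜), IsClosed (M : Set (ℕ → 𝕜)) ∧ ¬ Module.Finite 𝕜 M ∧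
      ∀ x ∈ M, x ≠ 0 → Dense (Set.range fun n : ℕ => (T ^ n) x) :=
  exists_hypercyclic_subspace_of_tailSurjective (tailSurjective_of_rowLengths T hc h1 h2)
end

section
/- Let X be a Fréchet sequence space in which the finite sequences form a dense subset, and let B_w : X → X be a weighted backward shift. If for every continuous seminorm p on X the set {k ≥ 0 : p(e_k) = 0} contains arbitrarily long intervals of consecutive integers, then B_w possesses a hypercyclic subspace of type 2. -/
/-!
Replace the seminorms by their increasing partial suprema `p n`, and fix a dense sequence of
finite vectors `v a`, with `v 0 = e 0`. Each block index `i = ⟪s, ⟪a, n⟫⟫` (nested `Nat.pair`)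
gets a position `N i` inside a long run of indices `k` with `p i (e k) = 0`, and a block `b i`
supported in that run with `B ^ N i (b i) = v a`. The runs are so long and so far apart that
`B ^ N i` kills the earlier blocks and maps the later ones into `ker (p i)`. Hence the generators
`x s = ∑ j, b ⟪s, j⟫` converge, `x s ∈ ker (p n)` for `s ≥ n`, and the coordinate at `N ⟪s, 0⟫`
yields functionals `c s` biorthogonal to them. On `M = closure (span {x s})` a vector is
determined by its coefficients `c s z`, and `p n (B ^ N i z - c s z • v a) = 0`; so if
`c s z ≠ 0`, the orbit of `z` comes arbitrarily close to the dense set `{c s z • v a}`. Finally,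
every continuous seminorm vanishes on some `ker (p n)`, which contains the independent vectors
`x s`, `s ≥ n`.
-/

open Filter Topology

/-- The kernel of a seminorm, as a submodule. -/
def Seminorm.kerSubmodule {𝕜 X : Type*} [NormedField 𝕜] [AddCommGroup X] [Module 𝕜 X]
    (p : Seminorm 𝕜 X) : Submodule 𝕜 X where
  carrier := {x | p x = 0}
  zero_mem' := map_zero p
  add_mem' := by
    intro a b ha hb
    simp only [Set.mem_setOf_eq] at *
    exact le_antisymm (by simpa [ha, hb] using map_add_le_add p a b) (apply_nonneg p _)
  smul_mem' := by
    intro c x hx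
    simp only [Set.mem_setOf_eq] at *
    simp [map_smul_eq_mul, hx]

open Finset

namespace Seminorm

variable {𝕜 X : Type*} [NormedField 𝕜] [AddCommGroup X] [Module 𝕜 X]

theorem mem_kerSubmodule {p : Seminorm 𝕜 X} {x : X} : x ∈ p.kerSubmodule ↔ p x = 0 := Iff.rfl

theorem kerSubmodule_antitone : Antitone (kerSubmodule : Seminorm 𝕜 X → Submodule 𝕜 X) :=
  fun _ _ hpq x hx => le_antisymm ((hpq x).trans_eq hx) (apply_nonneg _ x)

theorem isClosed_kerSubmodule [TopologicalSpace X] {p : Seminorm 𝕜 X} (hp : Continuous p) :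
    IsClosed (p.kerSubmodule : Set X) :=
  isClosed_singleton.preimage hp

theorem finset_sup_le_of_monotone {p : ℕ → Seminorm 𝕜 X} (hmono : Monotone p) (s : Finset ℕ) :
    s.sup p ≤ p (s.sup id) :=
  Finset.sup_le fun _ hi => hmono (le_sup (f := id) hi)

end Seminorm

namespace WithSeminorms

section

variable {𝕜 X : Type*} [NormedField 𝕜] [AddCommGroup X] [Module 𝕜 X] [TopologicalSpace X]
  {p : ℕ → Seminorm 𝕜 X}

theorem exists_ball_subset_of_monotone (hp : WithSeminorms p) (hmono : Monotone p) {x : X}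
    {U : Set X} (hU : U ∈ 𝓝 x) : ∃ n, ∃ r > 0, (p n).ball x r ⊆ U := by
  obtain ⟨⟨s, r⟩, hr, hsub⟩ := hp.hasBasis_ball.mem_iff.1 hU
  exact ⟨s.sup id, r, hr,
    (Seminorm.ball_antitone (Seminorm.finset_sup_le_of_monotone hmono s)).trans hsub⟩

theorem dense_of_monotone (hp : WithSeminorms p) (hmono : Monotone p) {S D : Set X}
    (hD : Dense D) (h : ∀ n, ∀ v ∈ D, ∃ x ∈ S, p n (x - v) = 0) : Dense S := by
  refine fun y => mem_closure_iff_nhds.2 fun U hU => ?_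
  obtain ⟨n, r, hr, hball⟩ := hp.exists_ball_subset_of_monotone hmono hU
  have hball_nhds : (p n).ball y r ∈ 𝓝 y :=
    (hp.mem_nhds_iff y _).2 ⟨{n}, r, hr, by rw [sup_singleton]⟩
  obtain ⟨v, hvy, hvD⟩ := mem_closure_iff_nhds.1 (hD y) _ hball_nhds
  obtain ⟨x, hxS, hxv⟩ := h n v hvD
  refine ⟨x, hball ?_, hxS⟩
  rw [Seminorm.mem_ball] at hvy ⊢
  calc p n (x - y) = p n ((x - v) + (v - y)) := by rw [sub_add_sub_cancel]
    _ ≤ p n (x - v) + p n (v - y) := map_add_le_add _ _ _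
    _ < r := by rwa [hxv, zero_add]

end

theorem summable_of_monotone {𝕜 X : Type*} [NormedField 𝕜] [AddCommGroup X] [Module 𝕜 X]
    [UniformSpace X] [IsUniformAddGroup X] [CompleteSpace X] {p : ℕ → Seminorm 𝕜 X}
    (hp : WithSeminorms p) (hmono : Monotone p) {f : ℕ → X}
    (hf : ∀ n, f n ∈ (p n).kerSubmodule) : Summable f := by
  refine summable_iff_vanishing.2 fun U hU => ?_
  obtain ⟨n, r, hr, hball⟩ := hp.exists_ball_subset_of_monotone hmono hU
  refine ⟨range n, fun t ht => hball ?_⟩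
  have hker : ∑ i ∈ t, f i ∈ (p n).kerSubmodule := Submodule.sum_mem _ fun i hi =>
    Seminorm.kerSubmodule_antitone
      (hmono (not_lt.1 fun h => disjoint_left.1 ht hi (mem_range.2 h))) (hf i)
  rwa [Seminorm.mem_ball_zero, Seminorm.mem_kerSubmodule.1 hker]

theorem exists_kerSubmodule_le_of_monotone {𝕜 X : Type*} [NontriviallyNormedField 𝕜]
    [AddCommGroup X] [Module 𝕜 X] [TopologicalSpace X] {p : ℕ → Seminorm 𝕜 X}
    (hp : WithSeminorms p) (hmono : Monotone p) {q : Seminorm 𝕜 X} (hq : Continuous q) :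
    ∃ n, (p n).kerSubmodule ≤ q.kerSubmodule := by
  obtain ⟨s, C, -, hle⟩ := Seminorm.bound_of_continuous hp q hq
  refine ⟨s.sup id, fun x hx => le_antisymm ?_ (apply_nonneg q x)⟩
  calc q x ≤ C * (s.sup p) x := hle x
    _ ≤ C * p (s.sup id) x := by gcongr; exact Seminorm.finset_sup_le_of_monotone hmono s x
    _ = 0 := by rw [Seminorm.mem_kerSubmodule.1 hx, mul_zero]

end WithSeminorms

theorem HasSum.mem_of_isClosed {ι α S : Type*} [AddCommMonoid α] [TopologicalSpace α]
    [SetLike S α] [AddSubmonoidClass S α] {s : S} (hs : IsClosed (s : Set α)) {f : ι → α}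
    {a : α} (hf : HasSum f a) (h : ∀ i, f i ∈ s) : a ∈ s :=
  hs.mem_of_tendsto hf (Eventually.of_forall fun _ => sum_mem fun i _ => h i)

theorem ContinuousLinearMap.apply_mem_of_mem_closure_span {R M N ι : Type*} [Semiring R]
    [AddCommMonoid M] [Module R M] [TopologicalSpace M] [ContinuousAdd M]
    [ContinuousConstSMul R M] [AddCommMonoid N] [Module R N] [TopologicalSpace N]
    (T : M →L[R] N) {K : Submodule R N} (hK : IsClosed (K : Set N)) {v : ι → M}
    (hv : ∀ i, T (v i) ∈ K) {z : M}
    (hz : z ∈ (Submodule.span R (Set.range v)).topologicalClosure) : T z ∈ K := by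
  refine Submodule.topologicalClosure_minimal (t := K.comap T.toLinearMap) _
    (Submodule.span_le.2 ?_) (hK.preimage T.continuous) hz
  rintro _ ⟨i, rfl⟩
  exact hv i

theorem exists_denseRange_sum_smul {𝕜 X : Type*} [Semiring 𝕜] [TopologicalSpace 𝕜]
    [TopologicalSpace.SeparableSpace 𝕜] [AddCommMonoid X] [Module 𝕜 X] [TopologicalSpace X]
    [ContinuousAdd X] [ContinuousSMul 𝕜 X] (e : ℕ → X)
    (he : Dense (Submodule.span 𝕜 (Set.range e) : Set X)) :
    ∃ (len : ℕ → ℕ) (c : ℕ → ℕ → 𝕜), len 0 = 1 ∧ c 0 0 = 1 ∧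
      DenseRange fun a => ∑ k ∈ range (len a), c a k • e k := by
  let u := TopologicalSpace.denseSeq (ℕ → 𝕜)
  let sumUpTo (n : ℕ) (a : ℕ → 𝕜) : X := ∑ k ∈ range n, a k • e k
  have span_subset : (Submodule.span 𝕜 (Set.range e) : Set X) ⊆
      closure (Set.range fun j => sumUpTo (Nat.unpair j).1 (u (Nat.unpair j).2)) := by
    intro x hx
    obtain ⟨g, rfl⟩ := Finsupp.mem_span_range_iff_exists_finsupp.1 hx
    have hsupp : g.support ⊆ range (g.support.sup id + 1) := fun k hk =>
      mem_range.2 (Nat.lt_succ_of_le (le_sup (f := id) hk))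
    rw [Finsupp.sum_of_support_subset g hsupp (fun k a => a • e k)
      fun k _ => zero_smul 𝕜 (e k)]
    have hcont : Continuous (sumUpTo (g.support.sup id + 1)) :=
      continuous_finsetSum _ fun k _ => (continuous_apply k).smul continuous_const
    change sumUpTo (g.support.sup id + 1) g ∈ _
    refine map_mem_closure hcont (TopologicalSpace.denseRange_denseSeq _ ⇑g) ?_
    rintro _ ⟨m, rfl⟩
    exact ⟨Nat.pair (g.support.sup id + 1) m, by simp only [Nat.unpair_pair, u]⟩
  refine ⟨fun a => a.casesOn 1 fun j => (Nat.unpair j).1,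
    fun a => a.casesOn (fun _ => 1) fun j => u (Nat.unpair j).2, rfl, rfl, ?_⟩
  refine (dense_closure.1 (he.mono span_subset)).mono ?_
  rintro _ ⟨j, rfl⟩
  exact ⟨j + 1, rfl⟩

theorem exists_block_positions (P : ℕ → ℕ → Prop) (hP : ∀ i L, ∃ k, ∀ t < L, P i (k + t))
    (len : ℕ → ℕ) : ∃ pos : ℕ → ℕ, (∀ i j, i < j → pos i + len i < pos j) ∧
      (∀ i t, t < len i → P i (pos i + t)) ∧
      (∀ i j t, j < i → t < len i → P i (pos i + t - pos j)) := by
  choose k hk using hP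
  -- `start i` lies beyond all blocks before `i`; block `i` starts `start i + 1` steps into a run
  -- of length `start i + 1 + len i`, so shifting it back by any `r ≤ start i` stays in the run.
  let start : ℕ → ℕ := fun i => Nat.rec 0 (fun j b => k j (b + 1 + len j) + b + 1 + len j) i
  let pos : ℕ → ℕ := fun i => k i (start i + 1 + len i) + start i + 1
  have start_succ (i : ℕ) : start (i + 1) = pos i + len i := rfl
  have start_lt_pos (i : ℕ) : start i < pos i := by simp only [pos]; omega
  have end_le_start {i j : ℕ} (h : i < j) : pos i + len i ≤ start j :=
    (start_succ i).symm.trans_le <| monotone_nat_of_le_succ (fun i => by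
      rw [start_succ]; exact (start_lt_pos i).le.trans (Nat.le_add_right _ _)) h
  have mem {i t r : ℕ} (ht : t < len i) (hr : r ≤ start i) : P i (pos i + t - r) := by
    have h := hk i (start i + 1 + len i) (start i + 1 + t - r) (by omega)
    rwa [show k i (start i + 1 + len i) + (start i + 1 + t - r) = pos i + t - r by
      simp only [pos]; omega] at h
  refine ⟨pos, fun i j h => ?_, fun i t ht => mem ht (Nat.zero_le _),
    fun i j t hj ht => mem ht ((Nat.le_add_right _ _).trans (end_le_start hj))⟩
  have := end_le_start h
  have := start_lt_pos j
  omega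

structure WeightedBackwardShift (𝕜 X : Type*) [NormedField 𝕜] [AddCommGroup X] [Module 𝕜 X]
    [TopologicalSpace X] where
  ι : X →L[𝕜] (ℕ → 𝕜)
  injective_ι : Function.Injective ι
  e : ℕ → X
  ι_e : ∀ n, ι (e n) = Pi.single n 1
  w : ℕ → 𝕜
  w_ne_zero : ∀ n, w (n + 1) ≠ 0
  B : X →L[𝕜] X
  ι_B : ∀ x n, ι (B x) n = w (n + 1) * ι x (n + 1)

namespace WeightedBackwardShift

variable {𝕜 X : Type*} [NormedField 𝕜] [AddCommGroup X] [Module 𝕜 X] [TopologicalSpace X]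
  (S : WeightedBackwardShift 𝕜 X)

def weightProd (N k : ℕ) : 𝕜 := ∏ t ∈ range N, S.w (k + t + 1)

theorem weightProd_ne_zero (N k : ℕ) : S.weightProd N k ≠ 0 :=
  prod_ne_zero_iff.2 fun t _ => S.w_ne_zero (k + t)

theorem ι_pow_B (N : ℕ) (x : X) (k : ℕ) :
    S.ι ((S.B ^ N) x) k = S.weightProd N k * S.ι x (k + N) := by
  induction N generalizing x with
  | zero => simp [weightProd]
  | succ N ih =>
    rw [pow_succ, mul_apply_eq_comp, ih, S.ι_B, weightProd, weightProd, prod_range_succ,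
      mul_assoc, add_assoc]

theorem pow_B_e_of_le {N a : ℕ} (h : N ≤ a) :
    (S.B ^ N) (S.e a) = S.weightProd N (a - N) • S.e (a - N) := by
  refine S.injective_ι (funext fun k => ?_)
  rw [S.ι_pow_B, map_smul, Pi.smul_apply, S.ι_e, S.ι_e, smul_eq_mul]
  rcases eq_or_ne k (a - N) with rfl | hk
  · rw [Nat.sub_add_cancel h, Pi.single_eq_same, Pi.single_eq_same]
  · rw [Pi.single_eq_of_ne (by omega), Pi.single_eq_of_ne hk, mul_zero, mul_zero]

theorem pow_B_e_of_lt {N a : ℕ} (h : a < N) : (S.B ^ N) (S.e a) = 0 := by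
  refine S.injective_ι (funext fun k => ?_)
  rw [S.ι_pow_B, S.ι_e, Pi.single_eq_of_ne (by omega), mul_zero, map_zero, Pi.zero_apply]

def vec (n : ℕ) (c : ℕ → 𝕜) : X := ∑ k ∈ range n, c k • S.e k

def lift (N n : ℕ) (c : ℕ → 𝕜) : X :=
  ∑ k ∈ range n, (c k / S.weightProd N k) • S.e (N + k)

theorem pow_B_lift (N n : ℕ) (c : ℕ → 𝕜) : (S.B ^ N) (S.lift N n c) = S.vec n c := by
  refine (map_sum _ _ _).trans (sum_congr rfl fun k _ => ?_)
  rw [map_smul, S.pow_B_e_of_le (Nat.le_add_right N k), Nat.add_sub_cancel_left, smul_smul,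
    div_mul_cancel₀ _ (S.weightProd_ne_zero N k)]

theorem pow_B_lift_of_le {N n M : ℕ} (c : ℕ → 𝕜) (h : N + n ≤ M) :
    (S.B ^ M) (S.lift N n c) = 0 :=
  (map_sum _ _ _).trans (sum_eq_zero fun k hk => by
    rw [map_smul, S.pow_B_e_of_lt (by rw [mem_range] at hk; omega), smul_zero])

theorem pow_B_lift_mem {N n M : ℕ} (c : ℕ → 𝕜) {K : Submodule 𝕜 X} (h : M ≤ N)
    (hK : ∀ k < n, S.e (N + k - M) ∈ K) : (S.B ^ M) (S.lift N n c) ∈ K := by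
  rw [lift, map_sum]
  refine K.sum_mem fun k hk => ?_
  rw [map_smul, S.pow_B_e_of_le (by omega)]
  exact K.smul_mem _ (K.smul_mem _ (hK k (mem_range.1 hk)))

theorem ι_lift (N n : ℕ) (c : ℕ → 𝕜) (j : ℕ) :
    S.ι (S.lift N n c) j =
      ∑ k ∈ range n, c k / S.weightProd N k * (Pi.single (N + k) (1 : 𝕜) : ℕ → 𝕜) j := by
  simp only [lift, map_sum, map_smul, S.ι_e, Finset.sum_apply, Pi.smul_apply, smul_eq_mul]

theorem ι_lift_eq_zero {N n j : ℕ} (c : ℕ → 𝕜) (h : j < N ∨ N + n ≤ j) :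
    S.ι (S.lift N n c) j = 0 := by
  rw [ι_lift]
  refine sum_eq_zero fun k hk => ?_
  rw [mem_range] at hk
  rw [Pi.single_eq_of_ne (by omega), mul_zero]

theorem ι_lift_self {N n : ℕ} (c : ℕ → 𝕜) (hn : 0 < n) :
    S.ι (S.lift N n c) N = c 0 / S.weightProd N 0 := by
  rw [ι_lift, sum_eq_single 0 (fun k _ hk => by rw [Pi.single_eq_of_ne (by omega), mul_zero])
    (fun h => absurd (mem_range.2 hn) h), add_zero, Pi.single_eq_same, mul_one]

end WeightedBackwardShift

structure HypercyclicBlockData (𝕜 X : Type*) [NormedField 𝕜] [AddCommGroup X] [Module 𝕜 X]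
    [TopologicalSpace X] extends WeightedBackwardShift 𝕜 X where
  p : ℕ → Seminorm 𝕜 X
  withSeminorms : WithSeminorms p
  monotone_p : Monotone p
  exists_kernel_interval : ∀ m L, ∃ k, ∀ t < L, p m (e (k + t)) = 0
  len : ℕ → ℕ
  coef : ℕ → ℕ → 𝕜
  len_zero : len 0 = 1
  coef_zero : coef 0 0 = 1
  denseRange_target : DenseRange fun a => ∑ k ∈ range (len a), coef a k • e k

namespace HypercyclicBlockData

/-- Block indices are encoded as `⟪s, ⟪a, n⟫⟫`: the block is a summand of `generator s` and has
target `a`; the component `n` makes every target recur at block indices `≥ n`. -/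
def targetOf (i : ℕ) : ℕ := (Nat.unpair (Nat.unpair i).2).1

theorem targetOf_pair (s a n : ℕ) : targetOf (Nat.pair s (Nat.pair a n)) = a := by
  simp only [targetOf, Nat.unpair_pair]

theorem targetOf_pair_zero (s : ℕ) : targetOf (Nat.pair s 0) = 0 := by
  simp [targetOf]

noncomputable section

section TopologicalSpace

variable {𝕜 X : Type*} [NormedField 𝕜] [AddCommGroup X] [Module 𝕜 X] [TopologicalSpace X]
  (D : HypercyclicBlockData 𝕜 X)

def target (a : ℕ) : X := D.vec (D.len a) (D.coef a)

def blockLen (i : ℕ) : ℕ := D.len (targetOf i)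

theorem exists_pos : ∃ pos : ℕ → ℕ, (∀ i j, i < j → pos i + D.blockLen i < pos j) ∧
    (∀ i t, t < D.blockLen i → D.p i (D.e (pos i + t)) = 0) ∧
    (∀ i j t, j < i → t < D.blockLen i → D.p i (D.e (pos i + t - pos j)) = 0) :=
  exists_block_positions (fun i c => D.p i (D.e c) = 0) D.exists_kernel_interval D.blockLen

def pos : ℕ → ℕ := D.exists_pos.choose

theorem pos_add_blockLen_lt {i j : ℕ} (h : i < j) : D.pos i + D.blockLen i < D.pos j :=
  D.exists_pos.choose_spec.1 i j h

theorem p_e_pos_add {i t : ℕ} (ht : t < D.blockLen i) : D.p i (D.e (D.pos i + t)) = 0 :=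
  D.exists_pos.choose_spec.2.1 i t ht

theorem p_e_pos_add_sub {i j t : ℕ} (hj : j < i) (ht : t < D.blockLen i) :
    D.p i (D.e (D.pos i + t - D.pos j)) = 0 :=
  D.exists_pos.choose_spec.2.2 i j t hj ht

theorem strictMono_pos : StrictMono D.pos :=
  fun _ _ h => (Nat.le_add_right _ _).trans_lt (D.pos_add_blockLen_lt h)

def block (i : ℕ) : X := D.lift (D.pos i) (D.blockLen i) (D.coef (targetOf i))

theorem block_mem_kerSubmodule {m i : ℕ} (h : m ≤ i) : D.block i ∈ (D.p m).kerSubmodule := by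
  simpa [block] using D.pow_B_lift_mem (M := 0) (D.coef (targetOf i)) (Nat.zero_le _)
    fun k hk => Seminorm.kerSubmodule_antitone (D.monotone_p h) (D.p_e_pos_add hk)

theorem ι_block_pos_of_ne {i j : ℕ} (h : i ≠ j) : D.ι (D.block i) (D.pos j) = 0 := by
  refine D.ι_lift_eq_zero _ ?_
  rcases h.lt_or_gt with hij | hji
  · exact Or.inr (D.pos_add_blockLen_lt hij).le
  · exact Or.inl (D.strictMono_pos hji)

theorem pow_B_pos_block_self (i : ℕ) : (D.B ^ D.pos i) (D.block i) = D.target (targetOf i) :=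
  D.pow_B_lift _ _ _

theorem pow_B_pos_block_mem_of_ne {m i j : ℕ} (hm : m ≤ i) (hij : j ≠ i) :
    (D.B ^ D.pos i) (D.block j) ∈ (D.p m).kerSubmodule := by
  rcases hij.lt_or_gt with hji | hij
  · rw [block, D.pow_B_lift_of_le _ (D.pos_add_blockLen_lt hji).le]
    exact zero_mem _
  · exact D.pow_B_lift_mem _ (D.strictMono_pos hij).le fun k hk =>
      Seminorm.kerSubmodule_antitone (D.monotone_p (hm.trans hij.le)) (D.p_e_pos_add_sub hij hk)

def generator (s : ℕ) : X := ∑' j, D.block (Nat.pair s j)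

/-- The block `⟪s, 0⟫` has target `e 0`, so this coordinate sees `generator s` and no other. -/
def coeff (s : ℕ) : X →L[𝕜] 𝕜 :=
  D.weightProd (D.pos (Nat.pair s 0)) 0 •
    (ContinuousLinearMap.proj (D.pos (Nat.pair s 0))).comp D.ι

end TopologicalSpace

section Closure

variable {𝕜 X : Type*} [NormedField 𝕜] [AddCommGroup X] [Module 𝕜 X] [TopologicalSpace X]
  [IsTopologicalAddGroup X] [ContinuousSMul 𝕜 X] (D : HypercyclicBlockData 𝕜 X)

def subspace : Submodule 𝕜 X := (Submodule.span 𝕜 (Set.range D.generator)).topologicalClosure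

theorem isClosed_subspace : IsClosed (D.subspace : Set X) :=
  Submodule.isClosed_topologicalClosure _

theorem generator_mem_subspace (s : ℕ) : D.generator s ∈ D.subspace :=
  Submodule.le_topologicalClosure _ (Submodule.subset_span (Set.mem_range_self s))

end Closure

section Complete

variable {𝕜 X : Type*} [NormedField 𝕜] [AddCommGroup X] [Module 𝕜 X] [UniformSpace X]
  [IsUniformAddGroup X] [CompleteSpace X] (D : HypercyclicBlockData 𝕜 X)

theorem hasSum_generator (s : ℕ) : HasSum (fun j => D.block (Nat.pair s j)) (D.generator s) :=
  (D.withSeminorms.summable_of_monotone D.monotone_p fun j =>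
    D.block_mem_kerSubmodule (Nat.right_le_pair s j)).hasSum

theorem generator_mem_kerSubmodule {m s : ℕ} (h : m ≤ s) :
    D.generator s ∈ (D.p m).kerSubmodule :=
  (D.hasSum_generator s).mem_of_isClosed
    (Seminorm.isClosed_kerSubmodule (D.withSeminorms.continuous_seminorm m))
    fun j => D.block_mem_kerSubmodule (h.trans (Nat.left_le_pair s j))

theorem hasSum_ι_generator (s c : ℕ) :
    HasSum (fun j => D.ι (D.block (Nat.pair s j)) c) (D.ι (D.generator s) c) :=
  Pi.hasSum.1 ((D.hasSum_generator s).mapL D.ι) c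

theorem ι_generator_eq_zero_of_lt {s c : ℕ} (h : c < s) : D.ι (D.generator s) c = 0 :=
  (D.hasSum_ι_generator s c).unique (hasSum_zero.congr_fun fun j => D.ι_lift_eq_zero _ (Or.inl
    (h.trans_le ((Nat.left_le_pair s j).trans (D.strictMono_pos.id_le _)))))

theorem ι_generator_pos_pair_zero (s t : ℕ) :
    D.ι (D.generator t) (D.pos (Nat.pair s 0)) =
      if t = s then (D.weightProd (D.pos (Nat.pair s 0)) 0)⁻¹ else 0 := by
  split_ifs with hts
  · subst hts
    have hlen : 0 < D.blockLen (Nat.pair t 0) := by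
      rw [blockLen, targetOf_pair_zero, D.len_zero]
      exact one_pos
    rw [(D.hasSum_ι_generator t _).unique (hasSum_single 0 fun j hj =>
        D.ι_block_pos_of_ne fun h => hj (Nat.pair_eq_pair.1 h).2), block, D.ι_lift_self _ hlen,
      targetOf_pair_zero, D.coef_zero, one_div]
  · exact (D.hasSum_ι_generator t _).unique (hasSum_zero.congr_fun fun j => D.ι_block_pos_of_ne
      fun h => hts (by simpa using congrArg (fun i => (Nat.unpair i).1) h))

theorem coeff_generator (s t : ℕ) : D.coeff s (D.generator t) = if t = s then 1 else 0 := by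
  simp only [coeff, smul_apply, ContinuousLinearMap.comp_apply, ContinuousLinearMap.proj_apply,
    ι_generator_pos_pair_zero, smul_eq_mul]
  split_ifs
  · exact mul_inv_cancel₀ (D.weightProd_ne_zero _ _)
  · exact mul_zero _

theorem pow_B_pos_generator_sub_mem {m i : ℕ} (hm : m ≤ i) (t : ℕ) :
    (D.B ^ D.pos i) (D.generator t) -
        (if t = (Nat.unpair i).1 then D.target (targetOf i) else 0) ∈ (D.p m).kerSubmodule := by
  have hK := Seminorm.isClosed_kerSubmodule (D.withSeminorms.continuous_seminorm m)
  have hsum := (D.hasSum_generator t).mapL (D.B ^ D.pos i)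
  split_ifs with ht
  · have hi : Nat.pair t (Nat.unpair i).2 = i := by rw [ht, Nat.pair_unpair]
    classical
    have hupd := hsum.update (Nat.unpair i).2 0
    rw [hi, D.pow_B_pos_block_self, zero_sub, neg_add_eq_sub] at hupd
    refine hupd.mem_of_isClosed hK fun j => ?_
    rcases eq_or_ne j (Nat.unpair i).2 with rfl | hj
    · rw [Function.update_self]
      exact zero_mem _
    · rw [Function.update_of_ne hj]
      refine D.pow_B_pos_block_mem_of_ne hm fun h => hj ?_
      rw [← hi] at h
      exact (Nat.pair_eq_pair.1 h).2
  · rw [sub_zero]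
    exact hsum.mem_of_isClosed hK fun j => D.pow_B_pos_block_mem_of_ne hm fun h =>
      ht (by rw [← h, Nat.unpair_pair])

theorem linearIndependent_generator_add (n : ℕ) :
    LinearIndependent 𝕜 fun s => D.generator (s + n) :=
  .of_pairwise_dual_eq_zero_one _ (fun s => (D.coeff (s + n)).toLinearMap)
    (fun s t hst => by simpa [coeff_generator] using hst.symm)
    fun s => by simp [coeff_generator]

theorem not_finite_of_forall_generator_mem {V : Submodule 𝕜 X} (n : ℕ)
    (h : ∀ s, n ≤ s → D.generator s ∈ V) : ¬Module.Finite 𝕜 V := fun _ =>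
  Module.Finite.not_linearIndependent_of_infinite
    (fun s => (⟨D.generator (s + n), h _ (Nat.le_add_left n s)⟩ : V))
    (LinearIndependent.of_comp V.subtype (D.linearIndependent_generator_add n))

variable [ContinuousSMul 𝕜 X]

theorem pow_B_pos_sub_mem {z : X} (hz : z ∈ D.subspace) {m i : ℕ} (hm : m ≤ i) :
    (D.B ^ D.pos i) z - D.coeff (Nat.unpair i).1 z • D.target (targetOf i) ∈
      (D.p m).kerSubmodule := by
  refine ((D.B ^ D.pos i) - (D.coeff (Nat.unpair i).1).smulRight (D.target (targetOf i)))
    |>.apply_mem_of_mem_closure_span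
      (Seminorm.isClosed_kerSubmodule (D.withSeminorms.continuous_seminorm m)) (fun t => ?_) hz
  simpa [coeff_generator, ite_smul] using D.pow_B_pos_generator_sub_mem hm t

theorem ι_apply_eq_sum_coeff {z : X} (hz : z ∈ D.subspace) (c : ℕ) :
    D.ι z c = ∑ s ∈ range (c + 1), D.coeff s z * D.ι (D.generator s) c := by
  let T : X →L[𝕜] 𝕜 := (ContinuousLinearMap.proj c).comp D.ι -
    ∑ s ∈ range (c + 1), D.ι (D.generator s) c • D.coeff s
  have hT (t : ℕ) : T (D.generator t) ∈ (⊥ : Submodule 𝕜 𝕜) := by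
    rw [Submodule.mem_bot]
    simp only [T, sub_apply, ContinuousLinearMap.comp_apply, ContinuousLinearMap.proj_apply,
      _root_.sum_apply, smul_apply, coeff_generator, smul_eq_mul, mul_ite, mul_one, mul_zero,
      sum_ite_eq, mem_range]
    split_ifs with htc
    · exact sub_self _
    · rw [D.ι_generator_eq_zero_of_lt (by omega), sub_zero]
  have hTz := (Submodule.mem_bot 𝕜).1 (T.apply_mem_of_mem_closure_span
    (by rw [Submodule.bot_coe]; exact isClosed_singleton) hT hz)
  simpa [T, sub_eq_zero, mul_comm] using hTz

theorem eq_zero_of_forall_coeff_eq_zero {z : X} (hz : z ∈ D.subspace)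
    (h : ∀ s, D.coeff s z = 0) : z = 0 :=
  D.injective_ι <| funext fun c => by simp [D.ι_apply_eq_sum_coeff hz, h]

theorem denseRange_orbit {z : X} (hz : z ∈ D.subspace) (hz0 : z ≠ 0) :
    DenseRange fun n => (D.B ^ n) z := by
  obtain ⟨s, hs⟩ : ∃ s, D.coeff s z ≠ 0 := by
    by_contra! h
    exact hz0 (D.eq_zero_of_forall_coeff_eq_zero hz h)
  have hsurj : Function.Surjective (D.coeff s z • · : X → X) := fun y =>
    ⟨(D.coeff s z)⁻¹ • y, smul_inv_smul₀ hs y⟩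
  have hdense : DenseRange fun a => D.coeff s z • D.target a :=
    hsurj.denseRange.comp D.denseRange_target (continuous_const_smul _)
  refine D.withSeminorms.dense_of_monotone D.monotone_p hdense ?_
  rintro n _ ⟨a, rfl⟩
  let i := Nat.pair s (Nat.pair a n)
  have hni : n ≤ i := (Nat.right_le_pair a n).trans (Nat.right_le_pair s _)
  have hmem := D.pow_B_pos_sub_mem hz hni
  rw [Nat.unpair_pair, targetOf_pair] at hmem
  exact ⟨_, Set.mem_range_self (D.pos i), hmem⟩

end Complete

end

end HypercyclicBlockData

theorem weighted_shift_hypercyclic_subspace_type2_general {𝕜 X : Type*} [RCLike 𝕜]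
    [AddCommGroup X] [Module 𝕜 X] [UniformSpace X] [IsUniformAddGroup X]
    [ContinuousSMul 𝕜 X] [CompleteSpace X]
    (pfam : ℕ → Seminorm 𝕜 X) (hpfam : WithSeminorms pfam)
    (ι : X →L[𝕜] (ℕ → 𝕜)) (hι : Function.Injective ι)
    (e : ℕ → X) (he : ∀ n, ι (e n) = Pi.single n 1)
    (hdense : Dense ((Submodule.span 𝕜 (Set.range e) : Submodule 𝕜 X) : Set X))
    (w : ℕ → 𝕜) (hw : ∀ n, w (n + 1) ≠ 0)
    (B : X →L[𝕜] X) (hB : ∀ (x : X) (n : ℕ), ι (B x) n = w (n + 1) * ι x (n + 1))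
    (hker : ∀ q : Seminorm 𝕜 X, Continuous q → ∀ m : ℕ, ∃ k, ∀ i < m, q (e (k + i)) = 0) :
    ∃ M : Submodule 𝕜 X, IsClosed (M : Set X) ∧ ¬ Module.Finite 𝕜 M ∧
      (∀ x ∈ M, x ≠ 0 → Dense (Set.range fun n : ℕ => (B ^ n) x)) ∧
      (∀ q : Seminorm 𝕜 X, Continuous q → ¬ Module.Finite 𝕜 ↥(M ⊓ q.kerSubmodule)) := by
  obtain ⟨len, coef, hlen, hcoef, htarget⟩ := exists_denseRange_sum_smul e hdense
  have hp := hpfam.partial_sups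
  let D : HypercyclicBlockData 𝕜 X :=
    { ι, injective_ι := hι, e, ι_e := he, w, w_ne_zero := hw, B, ι_B := hB
      p := fun n => (Iic n).sup pfam
      withSeminorms := hp
      monotone_p := fun _ _ h => sup_mono (Iic_subset_Iic.2 h)
      exists_kernel_interval := fun m => hker _ (hp.continuous_seminorm m)
      len, coef, len_zero := hlen, coef_zero := hcoef, denseRange_target := htarget }
  refine ⟨D.subspace, D.isClosed_subspace,
    D.not_finite_of_forall_generator_mem 0 fun s _ => D.generator_mem_subspace s,
    fun z hz hz0 => D.denseRange_orbit hz hz0, fun q hq => ?_⟩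
  obtain ⟨n, hn⟩ := hp.exists_kerSubmodule_le_of_monotone D.monotone_p hq
  exact D.not_finite_of_forall_generator_mem n fun s hs =>
    ⟨D.generator_mem_subspace s, hn (D.generator_mem_kerSubmodule hs)⟩

/-- Weighted backward shifts on Fréchet sequence spaces: if the finite sequences are dense
in `X` (a Fréchet space embedded continuously and injectively in `ω = 𝕜^ℕ` via `ι`) and
for every continuous seminorm `q` the set `{k : q (e k) = 0}` contains arbitrarily long
intervals, then the weighted backward shift `B` has a hypercyclic subspace of type 2. -/
theorem weighted_shift_hypercyclic_subspace_type2 {𝕜 X : Type*} [RCLike 𝕜]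
    [AddCommGroup X] [Module 𝕜 X] [UniformSpace X] [IsUniformAddGroup X]
    [ContinuousSMul 𝕜 X] [CompleteSpace X] [T2Space X]
    (pfam : ℕ → Seminorm 𝕜 X) (hpfam : WithSeminorms pfam)
    (ι : X →L[𝕜] (ℕ → 𝕜)) (hι : Function.Injective ι)
    (e : ℕ → X) (he : ∀ n, ι (e n) = Pi.single n 1)
    (hdense : Dense ((Submodule.span 𝕜 (Set.range e) : Submodule 𝕜 X) : Set X))
    (w : ℕ → 𝕜) (hw : ∀ n, w (n + 1) ≠ 0)
    (B : X →L[𝕜] X) (hB : ∀ (x : X) (n : ℕ), ι (B x) n = w (n + 1) * ι x (n + 1))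
    (hker : ∀ q : Seminorm 𝕜 X, Continuous q → ∀ m : ℕ, ∃ k, ∀ i < m, q (e (k + i)) = 0) :
    ∃ M : Submodule 𝕜 X, IsClosed (M : Set X) ∧ ¬ Module.Finite 𝕜 M ∧
      (∀ x ∈ M, x ≠ 0 → Dense (Set.range fun n : ℕ => (B ^ n) x)) ∧
      (∀ q : Seminorm 𝕜 X, Continuous q → ¬ Module.Finite 𝕜 ↥(M ⊓ q.kerSubmodule)) :=
  weighted_shift_hypercyclic_subspace_type2_general pfam hpfam ι hι e he hdense w hw B hB hker
end

section
/- Let X be a Fréchet sequence space containing all finite sequences, with increasing seminorms (p_j) that are monotone: if |x_k| ≤ |y_k| for all k then p_j(x) ≤ p_j(y). If there exist a weighted shift B_w mapping X into X and a continuous seminorm p on X such that {k ≥ 0 : p(e_k) = 0} does not contain arbitrarily long intervals, then X possesses a continuous norm. -/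
/-!
Dominate `q` by a finite supremum `p'` of the monotone seminorms `p j`; then the indices `k` with
`p' (e k) ≠ 0` have gaps shorter than some `m`. Given `n ≥ m - 1`, pick such a `k` with
`n - m < k ≤ n`: the `k`-th coordinate of `B^(n-k) x` is a nonzero multiple of `x n`, so
monotonicity of `p'` gives `c n * ‖x n‖ ≤ ∑ i < m, p' (B^i x)` with `c n > 0`. Thus
`x ↦ sup_n c n * ‖x n‖` is finite everywhere; as a pointwise supremum of continuous seminorms on a
barrelled (here Fréchet) space it is continuous, which is how we get around `B` not being
continuous, and it vanishes only on `ker ι = 0`.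
-/

open Filter Finset

namespace Seminorm

variable {𝕜 X α : Type*} [NormedField 𝕜] [AddCommGroup X] [Module 𝕜 X]

def CoordMonotone (ι : X → α → 𝕜) (p : Seminorm 𝕜 X) : Prop :=
  ∀ x y, (∀ k, ‖ι x k‖ ≤ ‖ι y k‖) → p x ≤ p y

theorem CoordMonotone.finset_sup {ι : X → α → 𝕜} {β : Type*} {p : β → Seminorm 𝕜 X}
    {s : Finset β} (hp : ∀ j ∈ s, CoordMonotone ι (p j)) : CoordMonotone ι (s.sup p) :=
  fun x y hxy => finset_sup_apply_le (apply_nonneg _ _) fun j hj =>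
    (hp j hj x y hxy).trans (le_finset_sup_apply hj)

theorem CoordMonotone.norm_mul_le [DecidableEq α] {F : Type*} [FunLike F X (α → 𝕜)]
    [LinearMapClass F 𝕜 X (α → 𝕜)] {ι : F} {p : Seminorm 𝕜 X} (hp : CoordMonotone ι p)
    {e : X} {t : α} (he : ι e = Pi.single t 1) (x : X) : ‖ι x t‖ * p e ≤ p x := by
  rw [← map_smul_eq_mul]
  refine hp _ _ fun k => ?_
  rw [map_smul, he]
  rcases eq_or_ne k t with rfl | hk
  · simp
  · simp [Pi.single_eq_of_ne hk]

end Seminorm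

theorem weightedShift_pow_apply {𝕜 X : Type*} [CommSemiring 𝕜] [AddCommMonoid X] [Module 𝕜 X]
    {ι : X → ℕ → 𝕜} {w : ℕ → 𝕜} {B : Module.End 𝕜 X}
    (hB : ∀ x n, ι (B x) n = w (n + 1) * ι x (n + 1)) (j : ℕ) (x : X) (t : ℕ) :
    ι ((B ^ j) x) t = (∏ u ∈ range j, w (t + u + 1)) * ι x (t + j) := by
  induction j generalizing x with
  | zero => simp
  | succ j ih =>
    rw [pow_succ, Module.End.mul_apply, ih, hB, prod_range_succ, mul_assoc, ← add_assoc]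

theorem Nat.exists_le_lt_add_of_forall_exists_lt {P : ℕ → Prop} {m : ℕ}
    (h : ∀ k, ∃ i < m, P (k + i)) {n : ℕ} (hn : m ≤ n + 1) : ∃ k ≤ n, n < k + m ∧ P k := by
  obtain ⟨i, hi, hP⟩ := h (n + 1 - m)
  exact ⟨_, by omega, by omega, hP⟩

theorem exists_continuous_norm_of_bddAbove_norm_apply {𝕜 X α : Type*} [NormedField 𝕜]
    [AddCommGroup X] [Module 𝕜 X] [TopologicalSpace X] [BarrelledSpace 𝕜 X]
    (φ : α → X →L[𝕜] 𝕜) (hbdd : ∀ x, BddAbove (Set.range fun a => ‖φ a x‖))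
    (hsep : ∀ x, (∀ a, φ a x = 0) → x = 0) :
    ∃ r : Seminorm 𝕜 X, Continuous r ∧ ∀ x : X, x ≠ 0 → r x ≠ 0 := by
  let S a : Seminorm 𝕜 X := (normSeminorm 𝕜 𝕜).comp (φ a).toLinearMap
  have hS : BddAbove (Set.range S) := Seminorm.bddAbove_range_iff.2 hbdd
  refine ⟨⨆ a, S a, ?_, fun x hx hr => hx (hsep x fun a => norm_eq_zero.1 ?_)⟩
  · rw [Seminorm.coe_iSup_eq hS]
    exact Seminorm.continuous_iSup S (fun a => (φ a).continuous.norm) hS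
  · refine le_antisymm ?_ (norm_nonneg _)
    calc ‖φ a x‖ ≤ ⨆ a, S a x := le_ciSup (hbdd x) a
      _ = 0 := by rw [← Seminorm.iSup_apply hS, hr]

theorem exists_continuous_norm_of_eventually_mul_norm_coord_le {𝕜 X : Type*} [RCLike 𝕜]
    [AddCommGroup X] [Module 𝕜 X] [TopologicalSpace X] [BarrelledSpace 𝕜 X]
    (ι : X →L[𝕜] (ℕ → 𝕜)) (hι : Function.Injective ι) (c : ℕ → ℝ) (hc : ∀ n, 0 < c n)
    (hbdd : ∀ x, ∃ M, ∀ᶠ n in atTop, c n * ‖ι x n‖ ≤ M) :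
    ∃ r : Seminorm 𝕜 X, Continuous r ∧ ∀ x : X, x ≠ 0 → r x ≠ 0 := by
  let φ n : X →L[𝕜] 𝕜 := (c n : 𝕜) • (ContinuousLinearMap.proj n ∘L ι)
  have hφ n x : ‖φ n x‖ = c n * ‖ι x n‖ := by
    simp [φ, abs_of_pos (hc n)]
  refine exists_continuous_norm_of_bddAbove_norm_apply φ (fun x => ?_) fun x hx => ?_
  · obtain ⟨M, hM⟩ := hbdd x
    simp_rw [hφ]
    exact (isBoundedUnder_of_eventually_le hM).bddAbove_range
  · refine hι (funext fun n => ?_)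
    simpa [φ, (hc n).ne'] using hx n

namespace Seminorm.CoordMonotone

variable {𝕜 X F : Type*} [RCLike 𝕜] [AddCommGroup X] [Module 𝕜 X] [FunLike F X (ℕ → 𝕜)]
  [LinearMapClass F 𝕜 X (ℕ → 𝕜)] {ι : F} {p : Seminorm 𝕜 X} {e : ℕ → X} {w : ℕ → 𝕜}
  {B : Module.End 𝕜 X}

theorem norm_prod_mul_le_weightedShift_pow (hp : CoordMonotone ι p)
    (he : ∀ n, ι (e n) = Pi.single n 1) (hB : ∀ x n, ι (B x) n = w (n + 1) * ι x (n + 1))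
    (k i : ℕ) (x : X) :
    ‖∏ u ∈ range i, w (k + u + 1)‖ * p (e k) * ‖ι x (k + i)‖ ≤ p ((B ^ i) x) := by
  have := hp.norm_mul_le (he k) ((B ^ i) x)
  rw [weightedShift_pow_apply hB, norm_mul] at this
  linarith

theorem exists_pos_mul_norm_le_sum (hp : CoordMonotone ι p)
    (he : ∀ n, ι (e n) = Pi.single n 1) (hw : ∀ n, w (n + 1) ≠ 0)
    (hB : ∀ x n, ι (B x) n = w (n + 1) * ι x (n + 1)) {m : ℕ}
    (hgap : ∀ k, ∃ i < m, p (e (k + i)) ≠ 0) {n : ℕ} (hn : m ≤ n + 1) :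
    ∃ c : ℝ, 0 < c ∧ ∀ x, c * ‖ι x n‖ ≤ ∑ i ∈ range m, p ((B ^ i) x) := by
  obtain ⟨k, hkn, hnk, hk⟩ :=
    Nat.exists_le_lt_add_of_forall_exists_lt (P := fun j => p (e j) ≠ 0) hgap hn
  refine ⟨‖∏ u ∈ range (n - k), w (k + u + 1)‖ * p (e k),
    mul_pos (norm_pos_iff.2 (prod_ne_zero_iff.2 fun u _ => hw _))
      ((apply_nonneg _ _).lt_of_ne' hk), fun x => ?_⟩
  calc _ = ‖∏ u ∈ range (n - k), w (k + u + 1)‖ * p (e k) * ‖ι x (k + (n - k))‖ := by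
        rw [Nat.add_sub_cancel' hkn]
    _ ≤ p ((B ^ (n - k)) x) := hp.norm_prod_mul_le_weightedShift_pow he hB k (n - k) x
    _ ≤ ∑ i ∈ range m, p ((B ^ i) x) :=
        single_le_sum (f := fun i => p ((B ^ i) x)) (fun _ _ => apply_nonneg _ _)
          (mem_range.2 (by omega))

end Seminorm.CoordMonotone

theorem continuous_norm_of_weighted_shift_general {𝕜 X : Type*} [RCLike 𝕜]
    [AddCommGroup X] [Module 𝕜 X] [UniformSpace X] [IsUniformAddGroup X]
    [ContinuousSMul 𝕜 X] [CompleteSpace X]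
    (p : ℕ → Seminorm 𝕜 X) (hp : WithSeminorms p)
    (ι : X →L[𝕜] (ℕ → 𝕜)) (hι : Function.Injective ι)
    (e : ℕ → X) (he : ∀ n, ι (e n) = Pi.single n 1)
    (hmon : ∀ (j : ℕ) (x y : X), (∀ k, ‖ι x k‖ ≤ ‖ι y k‖) → p j x ≤ p j y)
    (w : ℕ → 𝕜) (hw : ∀ n, w (n + 1) ≠ 0)
    (B : X →ₗ[𝕜] X) (hB : ∀ (x : X) (n : ℕ), ι (B x) n = w (n + 1) * ι x (n + 1))
    (q : Seminorm 𝕜 X) (hq : Continuous q)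
    (hint : ¬ ∀ m : ℕ, ∃ k, ∀ i < m, q (e (k + i)) = 0) :
    ∃ r : Seminorm 𝕜 X, Continuous r ∧ ∀ x : X, x ≠ 0 → r x ≠ 0 := by
  push Not at hint
  obtain ⟨m, hgap⟩ := hint
  obtain ⟨s, C, -, hqC⟩ := Seminorm.bound_of_continuous hp q hq
  have hmon' : (s.sup p).CoordMonotone ι := Seminorm.CoordMonotone.finset_sup fun j _ => hmon j
  have hgap' : ∀ k, ∃ i < m, s.sup p (e (k + i)) ≠ 0 := fun k =>
    (hgap k).imp fun i ⟨hi, hqi⟩ => ⟨hi, fun h0 => hqi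
      (le_antisymm (by simpa [h0] using hqC (e (k + i))) (apply_nonneg _ _))⟩
  have hc n : ∃ c : ℝ, 0 < c ∧
      ∀ x, m ≤ n + 1 → c * ‖ι x n‖ ≤ ∑ i ∈ range m, s.sup p ((B ^ i) x) := by
    by_cases hn : m ≤ n + 1
    · obtain ⟨c, hc, hcx⟩ := hmon'.exists_pos_mul_norm_le_sum he hw hB hgap' hn
      exact ⟨c, hc, fun x _ => hcx x⟩
    · exact ⟨1, one_pos, fun _ h => absurd h hn⟩
  choose c hc0 hcM using hc
  -- With these instances `X` is completely metrizable, hence Baire, hence barrelled.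
  have : FirstCountableTopology X := hp.firstCountableTopology
  have : (uniformity X).IsCountablyGenerated := IsUniformAddGroup.uniformity_countably_generated
  exact exists_continuous_norm_of_eventually_mul_norm_coord_le ι hι c hc0
    fun x => ⟨_, eventually_atTop.2 ⟨m, fun n hn => hcM n x (by omega)⟩⟩

/-- If a Fréchet sequence space `X` (embedded in `ω = 𝕜^ℕ` via `ι`, containing all finite
sequences, with increasing monotone seminorms) admits a weighted shift `B` mapping `X`
into `X` and a continuous seminorm `q` such that `{k : q (e k) = 0}` does not contain
arbitrarily long intervals, then `X` possesses a continuous norm. -/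
theorem continuous_norm_of_weighted_shift {𝕜 X : Type*} [RCLike 𝕜]
    [AddCommGroup X] [Module 𝕜 X] [UniformSpace X] [IsUniformAddGroup X]
    [ContinuousSMul 𝕜 X] [CompleteSpace X] [T2Space X]
    (p : ℕ → Seminorm 𝕜 X) (hp : WithSeminorms p) (hm : ∀ j, p j ≤ p (j + 1))
    (ι : X →L[𝕜] (ℕ → 𝕜)) (hι : Function.Injective ι)
    (e : ℕ → X) (he : ∀ n, ι (e n) = Pi.single n 1)
    (hfin : ∀ y : ℕ → 𝕜, (Function.support y).Finite → y ∈ Set.range ι)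
    (hmon : ∀ (j : ℕ) (x y : X), (∀ k, ‖ι x k‖ ≤ ‖ι y k‖) → p j x ≤ p j y)
    (w : ℕ → 𝕜) (hw : ∀ n, w (n + 1) ≠ 0)
    (B : X →ₗ[𝕜] X) (hB : ∀ (x : X) (n : ℕ), ι (B x) n = w (n + 1) * ι x (n + 1))
    (q : Seminorm 𝕜 X) (hq : Continuous q)
    (hint : ¬ ∀ m : ℕ, ∃ k, ∀ i < m, q (e (k + i)) = 0) :
    ∃ r : Seminorm 𝕜 X, Continuous r ∧ ∀ x : X, x ≠ 0 → r x ≠ 0 :=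
  continuous_norm_of_weighted_shift_general p hp ι hι e he hmon w hw B hB q hq hint
end
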